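/- arXiv:2011.07752 — 9 statements merged into one kernel-verified Lean document; each statement's English description precedes it below -/
import Mathlib

section
/- Let V̂ = V ∪ A be a finite node set, where A is a set of auxiliary nodes disjoint from V. Let G be a directed graph on V̂ with nonnegative edge weights w, and for T ⊆ V̂ let cut_G(T) = Σ_{(u,v) edge of G, u∈T, v∉T} w_{uv}. Let cut_H be a nonnegative set function on subsets of V such that for every S ⊆ V, cut_H(S) = min{ cut_G(T) : T ⊆ V̂, T ∩ V = S }. Let d : V → ℝ_{>0} be a degree vector, extended by d_u = 0 for u ∈ A; set vol(T) = Σ_{v ∈ T∩V} d_v, and define conductances φ_G(T) = cut_G(T)/min(vol(T), vol(V̂) − vol(T)) for T ⊆ V̂ with 0 < vol(T) < vol(V̂), and φ_H(S) = cut_H(S)/min(vol(S), vol(V) − vol(S)) for S ⊆ V with 0 < vol(S) < vol(V). Then: if T* minimizes φ_G over all T ⊆ V̂ with 0 < vol(T) < vol(V̂), the set S* = T* ∩ V minimizes φ_H over all S ⊆ V with 0 < vol(S) < vol(V), and φ_H(S*) = φ_G(T*). -/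
/- The denominator of `φ_G(T)` depends only on `T ∩ V`, because the volume only counts nodes
of `V`. So `φ_G` is a cut value divided by a function of the projection `T ↦ T ∩ V`, and
minimizing `φ_G` over all `T` amounts to first minimizing `cut_G` over each fibre `T ∩ V = S`,
which gives `cut_H S` by the cut-preservation hypothesis, and then minimizing `φ_H` over `S`. -/

open Finset

noncomputable section

/-- Directed cut of a node set `T`: total weight of edges leaving `T`. -/
def cutG {N : Type*} [Fintype N] [DecidableEq N] (w : N → N → ℝ) (T : Finset N) : ℝ :=
  ∑ u ∈ T, ∑ v ∈ Tᶜ, w u v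

/-- Volume of `T`, counting only the degrees of original (non-auxiliary) nodes. -/
def volD {N : Type*} [DecidableEq N] (V : Finset N) (d : N → ℝ) (T : Finset N) : ℝ :=
  ∑ v ∈ T ∩ V, d v

end

theorem isMinOn_div_of_isLeast_fiber {X Y : Type*} (π : X → Y) (c : X → ℝ) (cH m : Y → ℝ)
    {s : Set Y} (hcH : ∀ y ∈ s, IsLeast {r | ∃ x, π x = y ∧ c x = r} (cH y))
    {x₀ : X} (hx₀ : π x₀ ∈ s) (hm : 0 ≤ m (π x₀))
    (hmin : IsMinOn (fun x => c x / m (π x)) (π ⁻¹' s) x₀) :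
    IsMinOn (fun y => cH y / m y) s (π x₀) ∧ cH (π x₀) / m (π x₀) = c x₀ / m (π x₀) := by
  have hle : ∀ y ∈ s, c x₀ / m (π x₀) ≤ cH y / m y := by
    intro y hy
    obtain ⟨x, rfl, hx⟩ := (hcH y hy).1
    simpa [hx] using hmin (Set.mem_preimage.2 hy)
  have hge : cH (π x₀) / m (π x₀) ≤ c x₀ / m (π x₀) :=
    div_le_div_of_nonneg_right ((hcH _ hx₀).2 ⟨x₀, rfl, rfl⟩) hm
  have heq := le_antisymm hge (hle _ hx₀)
  exact ⟨fun y hy => heq.trans_le (hle y hy), heq⟩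

section Volume

variable {N : Type*} [DecidableEq N] (V : Finset N) (d : N → ℝ)

theorem volD_inter_right (T : Finset N) : volD V d (T ∩ V) = volD V d T := by
  rw [volD, volD, inter_assoc, inter_self]

theorem volD_univ [Fintype N] : volD V d univ = volD V d V := by
  rw [volD, volD, univ_inter, inter_self]

end Volume

theorem conductance_preserving_general {N : Type*} [Fintype N] [DecidableEq N]
    (V : Finset N)
    (w : N → N → ℝ)
    (cutH : Finset N → ℝ)
    (hcutH : ∀ S ⊆ V,
      IsLeast {c : ℝ | ∃ T : Finset N, T ∩ V = S ∧ cutG w T = c} (cutH S))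
    (d : N → ℝ)
    (Tstar : Finset N)
    (hfeas0 : 0 < volD V d Tstar) (hfeasM : volD V d Tstar < volD V d univ)
    (hmin : ∀ T : Finset N, 0 < volD V d T → volD V d T < volD V d univ →
      cutG w Tstar / min (volD V d Tstar) (volD V d univ - volD V d Tstar) ≤
        cutG w T / min (volD V d T) (volD V d univ - volD V d T)) :
    (∀ S ⊆ V, 0 < volD V d S → volD V d S < volD V d V →
      cutH (Tstar ∩ V) /
          min (volD V d (Tstar ∩ V)) (volD V d V - volD V d (Tstar ∩ V)) ≤
        cutH S / min (volD V d S) (volD V d V - volD V d S)) ∧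
      cutH (Tstar ∩ V) /
          min (volD V d (Tstar ∩ V)) (volD V d V - volD V d (Tstar ∩ V)) =
        cutG w Tstar / min (volD V d Tstar) (volD V d univ - volD V d Tstar) := by
  set s : Set (Finset N) := {S | S ⊆ V ∧ 0 < volD V d S ∧ volD V d S < volD V d V}
  rw [volD_univ] at hfeasM hmin ⊢
  have hfeas : Tstar ∩ V ∈ s :=
    ⟨inter_subset_right, by rwa [volD_inter_right], by rwa [volD_inter_right]⟩
  have hminG : IsMinOn (fun T => cutG w T /
      min (volD V d (T ∩ V)) (volD V d V - volD V d (T ∩ V))) ((· ∩ V) ⁻¹' s) Tstar := by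
    rintro T ⟨-, hT0, hTM⟩
    simp only [volD_inter_right] at hT0 hTM ⊢
    exact hmin T hT0 hTM
  obtain ⟨hminH, heq⟩ := isMinOn_div_of_isLeast_fiber (· ∩ V) (cutG w) cutH
    (fun S => min (volD V d S) (volD V d V - volD V d S)) (fun S hS => hcutH S hS.1) hfeas
    (le_min hfeas.2.1.le (sub_nonneg.2 hfeas.2.2.le)) hminG
  refine ⟨fun S hS hS0 hSM => hminH ⟨hS, hS0, hSM⟩, ?_⟩
  simpa only [volD_inter_right] using heq

/-- Conductance preservation for hypergraph-to-graph reductions: if the directed graph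
`G` on `V ∪ A` represents the hypergraph cut function `cut_H` (each `cut_H S` is the
minimum of `cut_G` over node sets `T` with `T ∩ V = S`), auxiliary nodes get degree `0`,
and `T*` minimizes the conductance `φ_G`, then `S* = T* ∩ V` minimizes the hypergraph
conductance `φ_H` and `φ_H(S*) = φ_G(T*)`. -/
theorem conductance_preserving {N : Type*} [Fintype N] [DecidableEq N]
    (V A : Finset N) (hdisj : Disjoint V A) (hcover : V ∪ A = univ)
    (w : N → N → ℝ) (hw : ∀ u v, 0 ≤ w u v)
    (cutH : Finset N → ℝ) (hcutH0 : ∀ S ⊆ V, 0 ≤ cutH S)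
    (hcutH : ∀ S ⊆ V,
      IsLeast {c : ℝ | ∃ T : Finset N, T ∩ V = S ∧ cutG w T = c} (cutH S))
    (d : N → ℝ) (hdV : ∀ v ∈ V, 0 < d v) (hdA : ∀ u ∈ A, d u = 0)
    (Tstar : Finset N)
    (hfeas0 : 0 < volD V d Tstar) (hfeasM : volD V d Tstar < volD V d univ)
    (hmin : ∀ T : Finset N, 0 < volD V d T → volD V d T < volD V d univ →
      cutG w Tstar / min (volD V d Tstar) (volD V d univ - volD V d Tstar) ≤
        cutG w T / min (volD V d T) (volD V d univ - volD V d T)) :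
    (∀ S ⊆ V, 0 < volD V d S → volD V d S < volD V d V →
      cutH (Tstar ∩ V) /
          min (volD V d (Tstar ∩ V)) (volD V d V - volD V d (Tstar ∩ V)) ≤
        cutH S / min (volD V d S) (volD V d V - volD V d S)) ∧
      cutH (Tstar ∩ V) /
          min (volD V d (Tstar ∩ V)) (volD V d V - volD V d (Tstar ∩ V)) =
        cutG w Tstar / min (volD V d Tstar) (volD V d univ - volD V d Tstar) :=
  conductance_preserving_general V w cutH hcutH d Tstar hfeas0 hfeasM hmin
end

section
/- Consider a finite directed graph on node set N = {s} ∪ V ∪ A ∪ {t}, where A consists of pairs of auxiliary nodes (a_e, b_e) indexed by a finite collection 𝓔 of hyperedges e ⊆ V: for each e the graph has edges (v, a_e) and (b_e, v) with positive weights for every v ∈ e, and an edge (a_e, b_e) with positive weight; in addition, for a fixed seed set R ⊆ V and degrees d_i > 0 (i ∈ V) and γ > 0, there is an edge (s, r) of weight γ d_r for each r ∈ R and an edge (v, t) of weight γ d_v for each v ∈ V∖R; there are no other edges. Fix κ > 0, let (t)₊ = max{t,0}, and consider minimizing F(x) = ½ Σ_{(i,j) edge} w_{ij} ((x_i − x_j)₊)²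 + κγ Σ_{i∈V} d_i x_i over all x : N → ℝ with x_s = 1, x_t = 0 and x ≥ 0. For any node u ≠ s,t define the residual g_u(x) = (1/γ)[ Σ_{(j,u) edge} w_{ju}(x_j − x_u)₊ − Σ_{(u,j) edge} w_{uj}(x_u − x_j)₊ ]. Then a feasible point x* is a global minimizer of F if and only if: (i) g_i(x*) ≤ κ d_i for every i ∈ V; (ii) (κ d_i − g_i(x*)) x*_i = 0 for every i ∈ V; and (iii) g_u(x*) = 0 for every auxiliary node u ∈ A. -/
/-!
The objective `F` is convex with partial derivatives `D_u = ℓ_u - γ g_u`, where `ℓ` is the linear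
cost. Since `t ↦ (t₊)²` has a 2-Lipschitz derivative, `F` lies between its tangent plane at `x`
and that plane plus a quadratic in `y - x`. Hence minimality over `{y ≥ 0}` with `y_s, y_t` pinned
is equivalent to complementarity `D_u ≥ 0`, `D_u x_u = 0` at every free node: the tangent bound
gives sufficiency, and moving one coordinate by a small `c` of either admissible sign gives
necessity. On original nodes this is (i)–(ii); on auxiliary nodes `ℓ_u = 0`, and it becomes
`g_u = 0` because `g_u ≥ 0` wherever `x_u = 0`.
-/

open Finset

/-- Nodes of the localized directed cut graph: source `s`, sink `t`, original vertices,
and the two auxiliary nodes `a_e`, `b_e` of each hyperedge gadget. -/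
abbrev LNode (V E : Type) : Type := Unit ⊕ Unit ⊕ V ⊕ E ⊕ E

namespace LNode

def s {V E : Type} : LNode V E := Sum.inl ()
def t {V E : Type} : LNode V E := Sum.inr (Sum.inl ())
def orig {V E : Type} (v : V) : LNode V E := Sum.inr (Sum.inr (Sum.inl v))
def auxA {V E : Type} (ε : E) : LNode V E := Sum.inr (Sum.inr (Sum.inr (Sum.inl ε)))
def auxB {V E : Type} (ε : E) : LNode V E := Sum.inr (Sum.inr (Sum.inr (Sum.inr ε)))

end LNode

open scoped Classical in
/-- Edge weights of the localized directed cut graph: `(s,r)` with weight `γ d_r` for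
`r ∈ R`, `(v,t)` with weight `γ d_v` for `v ∉ R`, `(v, a_ε)` and `(b_ε, v)` for `v ∈ ε`,
`(a_ε, b_ε)`, and no other edges (weight `0`). -/
noncomputable def lhWeight {V E : Type} (e : E → Finset V)
    (wva : V → E → ℝ) (wbv : E → V → ℝ) (wab : E → ℝ)
    (R : Finset V) (d : V → ℝ) (γ : ℝ) : LNode V E → LNode V E → ℝ
  | Sum.inl _, Sum.inr (Sum.inr (Sum.inl v)) => if v ∈ R then γ * d v else 0
  | Sum.inr (Sum.inr (Sum.inl v)), Sum.inr (Sum.inl _) => if v ∈ R then 0 else γ * d v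
  | Sum.inr (Sum.inr (Sum.inl v)), Sum.inr (Sum.inr (Sum.inr (Sum.inl ε))) =>
      if v ∈ e ε then wva v ε else 0
  | Sum.inr (Sum.inr (Sum.inr (Sum.inr ε))), Sum.inr (Sum.inr (Sum.inl v)) =>
      if v ∈ e ε then wbv ε v else 0
  | Sum.inr (Sum.inr (Sum.inr (Sum.inl ε))), Sum.inr (Sum.inr (Sum.inr (Sum.inr ε'))) =>
      if ε = ε' then wab ε else 0
  | _, _ => 0

/-- The LHQD objective `F(x) = ½ Σ_{(i,j)} w_{ij} ((x_i − x_j)₊)² + κγ Σ_{i∈V} d_i x_i`. -/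
noncomputable def lhF {V E : Type} [Fintype V] [Fintype E]
    (w : LNode V E → LNode V E → ℝ) (d : V → ℝ) (κ γ : ℝ) (x : LNode V E → ℝ) : ℝ :=
  (1 / 2) * ∑ i : LNode V E, ∑ j : LNode V E, w i j * (max (x i - x j) 0) ^ 2
    + κ * γ * ∑ v : V, d v * x (LNode.orig v)

/-- The residual `g_u(x)` of a node `u`. -/
noncomputable def lhRes {V E : Type} [Fintype V] [Fintype E]
    (w : LNode V E → LNode V E → ℝ) (γ : ℝ) (x : LNode V E → ℝ) (u : LNode V E) : ℝ :=
  (1 / γ) * (∑ j : LNode V E, w j u * max (x j - x u) 0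
    - ∑ j : LNode V E, w u j * max (x u - x j) 0)

lemma sq_max_zero_add_mul_sub_le (a b : ℝ) :
    max a 0 ^ 2 + 2 * max a 0 * (b - a) ≤ max b 0 ^ 2 := by
  rcases le_total a 0 with ha | ha <;> rcases le_total b 0 with hb | hb <;>
    simp only [max_eq_left, max_eq_right, ha, hb] <;> nlinarith [sq_nonneg (b - a)]

lemma sq_max_zero_le_add_mul_sub_add_sq (a b : ℝ) :
    max b 0 ^ 2 ≤ max a 0 ^ 2 + 2 * max a 0 * (b - a) + (b - a) ^ 2 := by
  rcases le_total a 0 with ha | ha <;> rcases le_total b 0 with hb | hb <;>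
    simp only [max_eq_left, max_eq_right, ha, hb] <;> nlinarith [sq_nonneg (b - a)]

section CutObjective

variable {ι : Type*} [Fintype ι] (w : ι → ι → ℝ) (ℓ : ι → ℝ)

noncomputable def cutObjective (x : ι → ℝ) : ℝ :=
  (1 / 2) * ∑ i, ∑ j, w i j * max (x i - x j) 0 ^ 2 + ∑ u, ℓ u * x u

noncomputable def cutGrad (x : ι → ℝ) (u : ι) : ℝ :=
  ℓ u + ∑ j, w u j * max (x u - x j) 0 - ∑ j, w j u * max (x j - x u) 0

lemma sum_cutGrad_mul (x z : ι → ℝ) :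
    ∑ u, cutGrad w ℓ x u * z u =
      ∑ u, ℓ u * z u + ∑ i, ∑ j, w i j * max (x i - x j) 0 * (z i - z j) := by
  have hswap : ∑ u, ∑ j, w j u * max (x j - x u) 0 * z u =
      ∑ i, ∑ j, w i j * max (x i - x j) 0 * z j := Finset.sum_comm
  simp only [cutGrad, add_mul, sub_mul, Finset.sum_mul, Finset.sum_add_distrib,
    Finset.sum_sub_distrib, hswap, mul_sub, add_sub_assoc]

lemma cutObjective_sub_sub_sum_cutGrad_mul (x y : ι → ℝ) :
    cutObjective w ℓ y - cutObjective w ℓ x - ∑ u, cutGrad w ℓ x u * (y u - x u) =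
      (1 / 2) * ∑ i, ∑ j, w i j * (max (y i - y j) 0 ^ 2 - max (x i - x j) 0 ^ 2
        - 2 * max (x i - x j) 0 * ((y i - y j) - (x i - x j))) := by
  simp only [cutObjective, sum_cutGrad_mul, mul_sub, Finset.sum_sub_distrib, Finset.mul_sum]
  ring_nf

variable {w}

lemma cutObjective_add_sum_cutGrad_mul_le (hw : ∀ i j, 0 ≤ w i j) (x y : ι → ℝ) :
    cutObjective w ℓ x + ∑ u, cutGrad w ℓ x u * (y u - x u) ≤ cutObjective w ℓ y := by
  have key := cutObjective_sub_sub_sum_cutGrad_mul w ℓ x y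
  have hrem : 0 ≤ ∑ i, ∑ j, w i j * (max (y i - y j) 0 ^ 2 - max (x i - x j) 0 ^ 2
      - 2 * max (x i - x j) 0 * ((y i - y j) - (x i - x j))) :=
    Finset.sum_nonneg fun i _ => Finset.sum_nonneg fun j _ => mul_nonneg (hw i j) <| by
      linarith [sq_max_zero_add_mul_sub_le (x i - x j) (y i - y j)]
  linarith

lemma cutObjective_le_add_sum_cutGrad_mul_add (hw : ∀ i j, 0 ≤ w i j) (x y : ι → ℝ) :
    cutObjective w ℓ y ≤ cutObjective w ℓ x + ∑ u, cutGrad w ℓ x u * (y u - x u)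
      + (1 / 2) * ∑ i, ∑ j, w i j * ((y i - y j) - (x i - x j)) ^ 2 := by
  have key := cutObjective_sub_sub_sum_cutGrad_mul w ℓ x y
  have hrem : ∑ i, ∑ j, w i j * (max (y i - y j) 0 ^ 2 - max (x i - x j) 0 ^ 2
      - 2 * max (x i - x j) 0 * ((y i - y j) - (x i - x j))) ≤
        ∑ i, ∑ j, w i j * ((y i - y j) - (x i - x j)) ^ 2 :=
    Finset.sum_le_sum fun i _ => Finset.sum_le_sum fun j _ =>
      mul_le_mul_of_nonneg_left (by
        linarith [sq_max_zero_le_add_mul_sub_add_sq (x i - x j) (y i - y j)]) (hw i j)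
  linarith

lemma cutObjective_add_single_le [DecidableEq ι] (hw : ∀ i j, 0 ≤ w i j) (x : ι → ℝ)
    (u : ι) (c : ℝ) :
    cutObjective w ℓ (x + Pi.single u c : ι → ℝ) ≤
      cutObjective w ℓ x + c * cutGrad w ℓ x u + c ^ 2 * ∑ i, ∑ j, w i j := by
  have hlin : ∑ v, cutGrad w ℓ x v * ((x + Pi.single u c : ι → ℝ) v - x v) =
      c * cutGrad w ℓ x u := by
    simp [Pi.single_apply, mul_comm]
  have hquad : (1 / 2) * ∑ i, ∑ j, w i j *
      (((x + Pi.single u c : ι → ℝ) i - (x + Pi.single u c : ι → ℝ) j) - (x i - x j)) ^ 2 ≤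
        c ^ 2 * ∑ i, ∑ j, w i j := by
    have hpair : ∀ i j, w i j *
        (((x + Pi.single u c : ι → ℝ) i - (x + Pi.single u c : ι → ℝ) j) - (x i - x j)) ^ 2 ≤
          c ^ 2 * w i j := by
      intro i j
      have hwc := mul_nonneg (hw i j) (sq_nonneg c)
      simp only [Pi.add_apply, Pi.single_apply]
      split_ifs <;> nlinarith
    have hW : 0 ≤ ∑ i, ∑ j, w i j :=
      Finset.sum_nonneg fun i _ => Finset.sum_nonneg fun j _ => hw i j
    calc _ ≤ (1 / 2) * ∑ i, ∑ j, c ^ 2 * w i j :=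
          mul_le_mul_of_nonneg_left
            (Finset.sum_le_sum fun i _ => Finset.sum_le_sum fun j _ => hpair i j) (by norm_num)
      _ ≤ c ^ 2 * ∑ i, ∑ j, w i j := by
        simp only [← Finset.mul_sum]
        nlinarith [mul_nonneg (sq_nonneg c) hW]
  linarith [cutObjective_le_add_sum_cutGrad_mul_add ℓ hw x (x + Pi.single u c : ι → ℝ)]

lemma nonneg_of_forall_mem_Ioo_mul_add_sq {D W ε : ℝ} (hε : 0 < ε)
    (h : ∀ c ∈ Set.Ioo 0 ε, 0 ≤ c * D + c ^ 2 * W) : 0 ≤ D := by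
  have hlim : Filter.Tendsto (fun c => D + c * W) (nhdsWithin 0 (Set.Ioi 0)) (nhds D) := by
    have : Continuous fun c : ℝ => D + c * W := by fun_prop
    simpa using (this.tendsto 0).mono_left nhdsWithin_le_nhds
  refine ge_of_tendsto hlim ?_
  filter_upwards [Ioo_mem_nhdsGT hε] with c hc
  have := h c hc
  nlinarith [hc.1]

theorem cutObjective_minimal_iff (hw : ∀ i j, 0 ≤ w i j) (S : Set ι) (x : ι → ℝ)
    (hx0 : ∀ u, 0 ≤ x u) :
    (∀ y : ι → ℝ, (∀ u ∈ S, y u = x u) → (∀ u, 0 ≤ y u) →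
        cutObjective w ℓ x ≤ cutObjective w ℓ y) ↔
      ∀ u ∉ S, 0 ≤ cutGrad w ℓ x u ∧ cutGrad w ℓ x u * x u = 0 := by
  classical
  constructor
  · intro hmin u hu
    set D := cutGrad w ℓ x u
    set W := ∑ i, ∑ j, w i j
    have hstep : ∀ c, 0 ≤ x u + c → 0 ≤ c * D + c ^ 2 * W := by
      intro c hc
      have hfeas : ∀ v ∈ S, (x + Pi.single u c : ι → ℝ) v = x v := fun v hv => by
        simp [show v ≠ u from fun h => hu (h ▸ hv)]
      have hnonneg : ∀ v, 0 ≤ (x + Pi.single u c : ι → ℝ) v := fun v => by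
        by_cases hv : v = u
        · subst hv; simpa using hc
        · simpa [Pi.single_apply, hv] using hx0 v
      linarith [hmin _ hfeas hnonneg, cutObjective_add_single_le ℓ hw x u c]
    have hD : 0 ≤ D := nonneg_of_forall_mem_Ioo_mul_add_sq one_pos fun c hc =>
      hstep c (by linarith [hx0 u, hc.1])
    refine ⟨hD, ?_⟩
    rcases (hx0 u).eq_or_lt with hxu | hxu
    · rw [← hxu, mul_zero]
    · have hD' : 0 ≤ -D := nonneg_of_forall_mem_Ioo_mul_add_sq hxu fun c hc => by
        have h := hstep (-c) (by linarith [hc.2])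
        rwa [neg_sq, neg_mul, ← mul_neg] at h
      rw [le_antisymm (neg_nonneg.mp hD') hD, zero_mul]
  · intro hkkt y hyS hy0
    suffices 0 ≤ ∑ u, cutGrad w ℓ x u * (y u - x u) by
      linarith [cutObjective_add_sum_cutGrad_mul_le ℓ hw x y]
    refine Finset.sum_nonneg fun u _ => ?_
    by_cases hu : u ∈ S
    · simp [hyS u hu]
    · obtain ⟨hD, hDx⟩ := hkkt u hu
      rw [mul_sub, hDx, sub_zero]
      exact mul_nonneg hD (hy0 u)

end CutObjective

lemma nonneg_and_mul_mul_eq_zero_iff {γ a b : ℝ} (hγ : 0 < γ) :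
    (0 ≤ γ * a ∧ γ * a * b = 0) ↔ (0 ≤ a ∧ a * b = 0) := by
  rw [mul_nonneg_iff_of_pos_left hγ, mul_assoc, mul_eq_zero, or_iff_right hγ.ne']

namespace LNode

variable {V E : Type}

lemma forall_notMem_s_t_iff (P : LNode V E → Prop) :
    (∀ u ∉ ({s, t} : Set (LNode V E)), P u) ↔
      (∀ v, P (orig v)) ∧ ∀ ε, P (auxA ε) ∧ P (auxB ε) := by
  constructor
  · intro h
    exact ⟨fun v => h _ (by simp [orig, s, t]),
      fun ε => ⟨h _ (by simp [auxA, s, t]), h _ (by simp [auxB, s, t])⟩⟩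
  · rintro ⟨horig, haux⟩ (_ | _ | v | ε | ε) hu
    · exact absurd (Or.inl rfl) hu
    · exact absurd (Or.inr rfl) hu
    · exact horig v
    · exact (haux ε).1
    · exact (haux ε).2

end LNode

section LHQD

variable {V E : Type}

lemma lhWeight_nonneg {e : E → Finset V} {wva : V → E → ℝ} {wbv : E → V → ℝ} {wab : E → ℝ}
    {R : Finset V} {d : V → ℝ} {γ : ℝ}
    (hwva : ∀ ε, ∀ v ∈ e ε, 0 ≤ wva v ε) (hwbv : ∀ ε, ∀ v ∈ e ε, 0 ≤ wbv ε v)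
    (hwab : ∀ ε, 0 ≤ wab ε) (hd : ∀ v, 0 ≤ d v) (hγ : 0 ≤ γ) (i j : LNode V E) :
    0 ≤ lhWeight e wva wbv wab R d γ i j := by
  rcases i with _ | _ | v | ε | ε <;> rcases j with _ | _ | v' | ε' | ε' <;>
    simp only [lhWeight, le_refl] <;> split_ifs with h
  all_goals first
    | exact le_rfl
    | exact mul_nonneg hγ (hd _)
    | exact hwva _ _ h
    | exact hwbv _ _ h
    | exact hwab _

def lhCost (c : V → ℝ) : LNode V E → ℝ
  | Sum.inr (Sum.inr (Sum.inl v)) => c v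
  | _ => 0

variable [Fintype V] [Fintype E]

lemma lhF_eq_cutObjective (w : LNode V E → LNode V E → ℝ) (d : V → ℝ) (κ γ : ℝ) :
    lhF w d κ γ = cutObjective w (lhCost fun v => κ * γ * d v) := by
  funext x
  simp [lhF, cutObjective, lhCost, Fintype.sum_sum_type, Finset.mul_sum, mul_assoc, LNode.orig]

lemma cutGrad_eq_sub_mul_lhRes (w : LNode V E → LNode V E → ℝ) (ℓ : LNode V E → ℝ) {γ : ℝ}
    (hγ : γ ≠ 0) (x : LNode V E → ℝ) (u : LNode V E) :
    cutGrad w ℓ x u = ℓ u - γ * lhRes w γ x u := by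
  rw [cutGrad, lhRes, ← mul_assoc, mul_one_div_cancel hγ, one_mul]
  ring

lemma lhRes_nonneg_of_eq_zero {w : LNode V E → LNode V E → ℝ} (hw : ∀ i j, 0 ≤ w i j) {γ : ℝ}
    (hγ : 0 ≤ γ) {x : LNode V E → ℝ} (hx0 : ∀ u, 0 ≤ x u) {u : LNode V E} (hu : x u = 0) :
    0 ≤ lhRes w γ x u := by
  have hout : ∀ j, max (x u - x j) 0 = 0 := fun j => max_eq_right (by linarith [hx0 j])
  simp only [lhRes, hout, mul_zero, Finset.sum_const_zero, sub_zero]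
  exact mul_nonneg (by positivity)
    (Finset.sum_nonneg fun j _ => mul_nonneg (hw j u) (le_max_right _ _))

lemma kkt_at_orig_iff (w : LNode V E → LNode V E → ℝ) (d : V → ℝ) (κ : ℝ) {γ : ℝ} (hγ : 0 < γ)
    (x : LNode V E → ℝ) (v : V) :
    (0 ≤ cutGrad w (lhCost fun v => κ * γ * d v) x (LNode.orig v) ∧
        cutGrad w (lhCost fun v => κ * γ * d v) x (LNode.orig v) * x (LNode.orig v) = 0) ↔
      (lhRes w γ x (LNode.orig v) ≤ κ * d v ∧
        (κ * d v - lhRes w γ x (LNode.orig v)) * x (LNode.orig v) = 0) := by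
  rw [cutGrad_eq_sub_mul_lhRes w _ hγ.ne', show lhCost (fun v => κ * γ * d v) (LNode.orig v) -
      γ * lhRes w γ x (LNode.orig v) = γ * (κ * d v - lhRes w γ x (LNode.orig v)) by
    simp only [lhCost, LNode.orig]; ring, nonneg_and_mul_mul_eq_zero_iff hγ, sub_nonneg]

lemma kkt_at_aux_iff {w : LNode V E → LNode V E → ℝ} (hw : ∀ i j, 0 ≤ w i j) (ℓ : LNode V E → ℝ)
    {γ : ℝ} (hγ : 0 < γ) {x : LNode V E → ℝ} (hx0 : ∀ u, 0 ≤ x u) {u : LNode V E}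
    (hu : ℓ u = 0) :
    (0 ≤ cutGrad w ℓ x u ∧ cutGrad w ℓ x u * x u = 0) ↔ lhRes w γ x u = 0 := by
  rw [cutGrad_eq_sub_mul_lhRes w ℓ hγ.ne', hu, zero_sub, ← mul_neg,
    nonneg_and_mul_mul_eq_zero_iff hγ, neg_nonneg, neg_mul, neg_eq_zero, mul_eq_zero]
  constructor
  · rintro ⟨hle, hres | hxu⟩
    · exact hres
    · exact le_antisymm hle (lhRes_nonneg_of_eq_zero hw hγ.le hx0 hxu)
  · intro hres
    exact ⟨hres.le, Or.inl hres⟩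

end LHQD

theorem lhqd_kkt_general {V E : Type} [Fintype V] [Fintype E]
    (e : E → Finset V) (wva : V → E → ℝ) (wbv : E → V → ℝ) (wab : E → ℝ)
    (R : Finset V) (d : V → ℝ) (γ κ : ℝ)
    (hwva : ∀ ε, ∀ v ∈ e ε, 0 < wva v ε) (hwbv : ∀ ε, ∀ v ∈ e ε, 0 < wbv ε v)
    (hwab : ∀ ε, 0 < wab ε) (hd : ∀ v, 0 < d v) (hγ : 0 < γ)
    (x : LNode V E → ℝ)
    (hxs : x LNode.s = 1) (hxt : x LNode.t = 0) (hx0 : ∀ u, 0 ≤ x u) :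
    (∀ y : LNode V E → ℝ, y LNode.s = 1 → y LNode.t = 0 → (∀ u, 0 ≤ y u) →
        lhF (lhWeight e wva wbv wab R d γ) d κ γ x ≤
          lhF (lhWeight e wva wbv wab R d γ) d κ γ y) ↔
      ((∀ v : V, lhRes (lhWeight e wva wbv wab R d γ) γ x (LNode.orig v) ≤ κ * d v) ∧
        (∀ v : V,
          (κ * d v - lhRes (lhWeight e wva wbv wab R d γ) γ x (LNode.orig v)) *
            x (LNode.orig v) = 0) ∧
        (∀ ε : E, lhRes (lhWeight e wva wbv wab R d γ) γ x (LNode.auxA ε) = 0 ∧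
          lhRes (lhWeight e wva wbv wab R d γ) γ x (LNode.auxB ε) = 0)) := by
  have hw : ∀ i j, 0 ≤ lhWeight e wva wbv wab R d γ i j :=
    lhWeight_nonneg (fun ε v hv => (hwva ε v hv).le) (fun ε v hv => (hwbv ε v hv).le)
      (fun ε => (hwab ε).le) (fun v => (hd v).le) hγ.le
  have hpinned : ∀ y : LNode V E → ℝ,
      (∀ u ∈ ({LNode.s, LNode.t} : Set (LNode V E)), y u = x u) ↔
        y LNode.s = 1 ∧ y LNode.t = 0 := by
    simp [hxs, hxt]
  have hmin := cutObjective_minimal_iff (lhCost fun v => κ * γ * d v) hw {LNode.s, LNode.t} x hx0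
  simp only [hpinned, and_imp] at hmin
  rw [lhF_eq_cutObjective, hmin, LNode.forall_notMem_s_t_iff, ← and_assoc, ← forall_and]
  exact and_congr (forall_congr' fun v => kkt_at_orig_iff _ d κ hγ x v) <| forall_congr' fun ε =>
    and_congr (kkt_at_aux_iff hw _ hγ hx0 rfl) (kkt_at_aux_iff hw _ hγ hx0 rfl)

/-- KKT characterization of global minimizers of the localized hypergraph quadratic
diffusion (LHQD) objective on the localized directed cut graph: a feasible `x*`
(`x*_s = 1`, `x*_t = 0`, `x* ≥ 0`) is a global minimizer iff (i) `g_i ≤ κ d_i` on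
original nodes, (ii) `(κ d_i − g_i) x*_i = 0` on original nodes, and (iii) `g_u = 0`
on all auxiliary nodes. -/
theorem lhqd_kkt {V E : Type} [Fintype V] [Fintype E] [DecidableEq V] [DecidableEq E]
    (e : E → Finset V) (wva : V → E → ℝ) (wbv : E → V → ℝ) (wab : E → ℝ)
    (R : Finset V) (d : V → ℝ) (γ κ : ℝ)
    (hwva : ∀ ε, ∀ v ∈ e ε, 0 < wva v ε) (hwbv : ∀ ε, ∀ v ∈ e ε, 0 < wbv ε v)
    (hwab : ∀ ε, 0 < wab ε) (hd : ∀ v, 0 < d v) (hγ : 0 < γ) (hκ : 0 < κ)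
    (x : LNode V E → ℝ)
    (hxs : x LNode.s = 1) (hxt : x LNode.t = 0) (hx0 : ∀ u, 0 ≤ x u) :
    (∀ y : LNode V E → ℝ, y LNode.s = 1 → y LNode.t = 0 → (∀ u, 0 ≤ y u) →
        lhF (lhWeight e wva wbv wab R d γ) d κ γ x ≤
          lhF (lhWeight e wva wbv wab R d γ) d κ γ y) ↔
      ((∀ v : V, lhRes (lhWeight e wva wbv wab R d γ) γ x (LNode.orig v) ≤ κ * d v) ∧
        (∀ v : V,
          (κ * d v - lhRes (lhWeight e wva wbv wab R d γ) γ x (LNode.orig v)) *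
            x (LNode.orig v) = 0) ∧
        (∀ ε : E, lhRes (lhWeight e wva wbv wab R d γ) γ x (LNode.auxA ε) = 0 ∧
          lhRes (lhWeight e wva wbv wab R d γ) γ x (LNode.auxB ε) = 0)) :=
  lhqd_kkt_general e wva wbv wab R d γ κ hwva hwbv hwab hd hγ x hxs hxt hx0
end

section
/- Let e be a nonempty finite index set, and let w_{ab} > 0, w_{ia} > 0 and w_{bi} > 0 for each i ∈ e be positive weights. Let x_i (i ∈ e), x_a, x_b be real numbers, and write (t)₊ = max{t,0}. If the two auxiliary residuals vanish, i.e. −w_{ab}(x_a − x_b)₊ + Σ_{i∈e} w_{ia}(x_i − x_a)₊ = 0 and w_{ab}(x_a − x_b)₊ − Σ_{i∈e} w_{bi}(x_b − x_i)₊ = 0, then x_a ≥ x_b. -/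
open Finset

theorem nonpos_of_sum_mul_max_zero_eq_zero {ι : Type*} {s : Finset ι} {w f : ι → ℝ}
    (hw : ∀ i ∈ s, 0 < w i) (hsum : ∑ i ∈ s, w i * max (f i) 0 = 0) {i : ι} (hi : i ∈ s) :
    f i ≤ 0 := by
  have hterm : w i * max (f i) 0 = 0 :=
    (sum_eq_zero_iff_of_nonneg fun j hj => mul_nonneg (hw j hj).le (le_max_right _ _)).mp
      hsum i hi
  exact max_eq_right_iff.mp ((mul_eq_zero.mp hterm).resolve_left (hw i hi).ne')

theorem aux_node_order_general {ι : Type*} (e : Finset ι) (he : e.Nonempty)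
    (wab : ℝ) (wia wbi : ι → ℝ)
    (hwia : ∀ i ∈ e, 0 < wia i) (hwbi : ∀ i ∈ e, 0 < wbi i)
    (x : ι → ℝ) (xa xb : ℝ)
    (hra : -wab * max (xa - xb) 0 + ∑ i ∈ e, wia i * max (x i - xa) 0 = 0)
    (hrb : wab * max (xa - xb) 0 - ∑ i ∈ e, wbi i * max (xb - x i) 0 = 0) :
    xb ≤ xa := by
  by_contra! hlt
  -- With no flow through `(a, b)`, nothing enters `a` and nothing leaves `b`.
  have hab : max (xa - xb) 0 = 0 := max_eq_right (by linarith)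
  rw [hab, mul_zero] at hra hrb
  obtain ⟨i, hi⟩ := he
  have hxi_le_xa : x i - xa ≤ 0 :=
    nonpos_of_sum_mul_max_zero_eq_zero hwia (by linarith) hi
  have hxb_le_xi : xb - x i ≤ 0 :=
    nonpos_of_sum_mul_max_zero_eq_zero hwbi (by linarith) hi
  linarith

/-- If the residuals of both auxiliary nodes `a` and `b` of a hyperedge gadget vanish,
then `x_a ≥ x_b`. -/
theorem aux_node_order {ι : Type*} (e : Finset ι) (he : e.Nonempty)
    (wab : ℝ) (wia wbi : ι → ℝ) (hwab : 0 < wab)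
    (hwia : ∀ i ∈ e, 0 < wia i) (hwbi : ∀ i ∈ e, 0 < wbi i)
    (x : ι → ℝ) (xa xb : ℝ)
    (hra : -wab * max (xa - xb) 0 + ∑ i ∈ e, wia i * max (x i - xa) 0 = 0)
    (hrb : wab * max (xa - xb) 0 - ∑ i ∈ e, wbi i * max (xb - x i) 0 = 0) :
    xb ≤ xa :=
  aux_node_order_general e he wab wia wbi hwia hwbi x xa xb hra hrb
end

section
/- Let V be a finite vertex set, R ⊆ V a seed set, d_i > 0 degrees for i ∈ V, γ > 0, and let 𝓔 be a finite collection of nonempty hyperedges e ⊆ V, each carrying positive weights w_{i a_e}, w_{b_e i} (i ∈ e) and w_{a_e b_e} and auxiliary values x_{a_e}, x_{b_e} ∈ ℝ. Let x_i ∈ ℝ for i ∈ V, and write (t)₊ = max{t,0}. Define residuals r_i = (1/γ) Σ_{e: i∈e} w_{b_e i}(x_{b_e} − x_i)₊ − (1/γ) Σ_{e: i∈e} w_{i a_e}(x_i − x_{a_e})₊ + d_i(𝟙[i∈R] − x_i) for i ∈ V, r_{a_e} = −(1/γ) w_{a_e b_e}(x_{a_e} − x_{b_e})₊ + (1/γ)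 Σ_{v∈e} w_{v a_e}(x_v − x_{a_e})₊, and r_{b_e} = (1/γ) w_{a_e b_e}(x_{a_e} − x_{b_e})₊ − (1/γ) Σ_{v∈e} w_{b_e v}(x_{b_e} − x_v)₊. If x_i ≥ 0 for all i ∈ V, r_i ≥ 0 for all i ∈ V, and r_{a_e} = r_{b_e} = 0 for every e ∈ 𝓔, then 0 ≤ x_u ≤ 1 for every node u ∈ V ∪ {a_e, b_e : e ∈ 𝓔}. -/
/-!
Each hyperedge gadget `v → a_e → b_e → v` carries three flows: into `a_e`, through
`a_e → b_e`, and out of `b_e`. Vanishing auxiliary residuals say the three are equal, and a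
positively weighted sum of positive parts vanishes exactly when every term does; this traps
`x_{a_e}` and `x_{b_e}` between the smallest and the largest value of `x` on `e`. At a vertex `j`
where `x` is largest, no hyperedge can then push mass into `j`, so `r_j ≥ 0` forces
`x_j ≤ 𝟙[j ∈ R] ≤ 1`.
-/

open Finset

theorem sum_mul_max_eq_zero_iff {ι : Type*} {s : Finset ι} {w f : ι → ℝ}
    (hw : ∀ i ∈ s, 0 < w i) :
    ∑ i ∈ s, w i * max (f i) 0 = 0 ↔ ∀ i ∈ s, f i ≤ 0 := by
  rw [sum_eq_zero_iff_of_nonneg fun i hi => mul_nonneg (hw i hi).le (le_max_right _ _)]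
  refine forall₂_congr fun i hi => ?_
  rw [mul_eq_zero, or_iff_right (hw i hi).ne', max_eq_right_iff]

theorem exists_bounds_of_gadget_iff {ι α : Type*} [LinearOrder α] {s : Finset ι}
    (hs : s.Nonempty) {y : ι → α} {a b : α}
    (hab : (∀ i ∈ s, y i ≤ a) ↔ a ≤ b) (hba : a ≤ b ↔ ∀ i ∈ s, b ≤ y i) :
    ((∃ i ∈ s, y i ≤ a) ∧ ∃ i ∈ s, a ≤ y i) ∧ ((∃ i ∈ s, y i ≤ b) ∧ ∃ i ∈ s, b ≤ y i) := by
  obtain ⟨k, hk⟩ := hs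
  refine ⟨⟨?_, ?_⟩, ?_, ?_⟩ <;> by_contra! h
  · have hba' : b < a := lt_of_not_ge fun hle => (h k hk).not_ge (hab.2 hle k hk)
    exact hba'.not_ge (hba.2 fun i hi => (hba'.trans (h i hi)).le)
  · have hle := hab.1 fun i hi => (h i hi).le
    exact (h k hk).not_ge (hle.trans (hba.1 hle k hk))
  · have hle := hba.2 fun i hi => (h i hi).le
    exact (h k hk).not_ge ((hab.2 hle k hk).trans hle)
  · have hba' : b < a := lt_of_not_ge fun hle => (h k hk).not_ge (hba.1 hle k hk)
    exact hba'.not_ge (hab.1 fun i hi => ((h i hi).trans hba').le)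

theorem gadget_bounds {ι : Type*} {s : Finset ι} (hs : s.Nonempty) {wi wo : ι → ℝ} {w : ℝ}
    (hwi : ∀ i ∈ s, 0 < wi i) (hwo : ∀ i ∈ s, 0 < wo i) (hw : 0 < w) {y : ι → ℝ} {a b : ℝ}
    (hin : ∑ i ∈ s, wi i * max (y i - a) 0 = w * max (a - b) 0)
    (hout : w * max (a - b) 0 = ∑ i ∈ s, wo i * max (b - y i) 0) :
    ((∃ i ∈ s, y i ≤ a) ∧ ∃ i ∈ s, a ≤ y i) ∧ ((∃ i ∈ s, y i ≤ b) ∧ ∃ i ∈ s, b ≤ y i) := by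
  have hmid : w * max (a - b) 0 = 0 ↔ a ≤ b := by
    rw [mul_eq_zero, or_iff_right hw.ne', max_eq_right_iff, sub_nonpos]
  refine exists_bounds_of_gadget_iff hs ?_ ?_
  · calc (∀ i ∈ s, y i ≤ a) ↔ ∀ i ∈ s, y i - a ≤ 0 := by simp only [sub_nonpos]
      _ ↔ ∑ i ∈ s, wi i * max (y i - a) 0 = 0 := (sum_mul_max_eq_zero_iff hwi).symm
      _ ↔ a ≤ b := by rw [hin, hmid]
  · calc a ≤ b ↔ ∑ i ∈ s, wo i * max (b - y i) 0 = 0 := by rw [← hout, hmid]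
      _ ↔ ∀ i ∈ s, b - y i ≤ 0 := sum_mul_max_eq_zero_iff hwo
      _ ↔ ∀ i ∈ s, b ≤ y i := by simp only [sub_nonpos]

theorem le_of_residual_nonneg {E : Type*} {s : Finset E} {wb wa xa xb : E → ℝ} {c d t y : ℝ}
    (hc : 0 ≤ c) (hd : 0 < d) (hwa : ∀ ε ∈ s, 0 ≤ wa ε) (hxb : ∀ ε ∈ s, xb ε ≤ y)
    (hr : 0 ≤ c * ∑ ε ∈ s, wb ε * max (xb ε - y) 0 - c * ∑ ε ∈ s, wa ε * max (y - xa ε) 0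
      + d * (t - y)) :
    y ≤ t := by
  have hinflow : ∑ ε ∈ s, wb ε * max (xb ε - y) 0 = 0 :=
    sum_eq_zero fun ε hε => by rw [max_eq_right (sub_nonpos.2 (hxb ε hε)), mul_zero]
  have houtflow : 0 ≤ c * ∑ ε ∈ s, wa ε * max (y - xa ε) 0 :=
    mul_nonneg hc <| sum_nonneg fun ε hε => mul_nonneg (hwa ε hε) (le_max_right _ _)
  rw [hinflow, mul_zero] at hr
  exact sub_nonneg.1 (nonneg_of_mul_nonneg_right (by linarith) hd)

/-- Invariant of the LHQD algorithm: if all original values are nonnegative, all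
residuals of original nodes are nonnegative, and both auxiliary residuals of every
hyperedge gadget vanish, then every value (original and auxiliary) lies in `[0,1]`. -/
theorem values_in_unit_interval {V E : Type*} [Fintype V] [Fintype E] [DecidableEq V]
    (R : Finset V) (d : V → ℝ) (hd : ∀ v, 0 < d v) (γ : ℝ) (hγ : 0 < γ)
    (e : E → Finset V) (he : ∀ ε, (e ε).Nonempty)
    (wia : V → E → ℝ) (wbi : E → V → ℝ) (wab : E → ℝ)
    (hwia : ∀ ε, ∀ v ∈ e ε, 0 < wia v ε) (hwbi : ∀ ε, ∀ v ∈ e ε, 0 < wbi ε v)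
    (hwab : ∀ ε, 0 < wab ε)
    (x : V → ℝ) (xa xb : E → ℝ)
    (hx0 : ∀ i, 0 ≤ x i)
    (hr : ∀ i : V,
      0 ≤ (1 / γ) * ∑ ε ∈ univ.filter (fun ε => i ∈ e ε), wbi ε i * max (xb ε - x i) 0
          - (1 / γ) * ∑ ε ∈ univ.filter (fun ε => i ∈ e ε), wia i ε * max (x i - xa ε) 0
          + d i * ((if i ∈ R then 1 else 0) - x i))
    (hra : ∀ ε : E,
      -(1 / γ) * (wab ε * max (xa ε - xb ε) 0)
          + (1 / γ) * ∑ v ∈ e ε, wia v ε * max (x v - xa ε) 0 = 0)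
    (hrb : ∀ ε : E,
      (1 / γ) * (wab ε * max (xa ε - xb ε) 0)
          - (1 / γ) * ∑ v ∈ e ε, wbi ε v * max (xb ε - x v) 0 = 0) :
    (∀ i : V, 0 ≤ x i ∧ x i ≤ 1) ∧
      (∀ ε : E, (0 ≤ xa ε ∧ xa ε ≤ 1) ∧ (0 ≤ xb ε ∧ xb ε ≤ 1)) := by
  have hgadget : ∀ ε, ((∃ v ∈ e ε, x v ≤ xa ε) ∧ ∃ v ∈ e ε, xa ε ≤ x v) ∧
      ((∃ v ∈ e ε, x v ≤ xb ε) ∧ ∃ v ∈ e ε, xb ε ≤ x v) := by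
    intro ε
    refine gadget_bounds (he ε) (hwia ε) (hwbi ε) (hwab ε) ?_ ?_
    · have h := hra ε
      field_simp at h
      linarith
    · have h := hrb ε
      field_simp at h
      linarith
  have hle_one : ∀ i, x i ≤ 1 := by
    intro i
    have : Nonempty V := ⟨i⟩
    obtain ⟨j, hj⟩ := Finite.exists_max x
    have hxj : x j ≤ if j ∈ R then 1 else 0 :=
      le_of_residual_nonneg (by positivity) (hd j)
        (fun ε hε => (hwia ε j (mem_filter.1 hε).2).le)
        (fun ε _ => let ⟨v, _, hv⟩ := (hgadget ε).2.2; hv.trans (hj v)) (hr j)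
    have hind : (if j ∈ R then (1 : ℝ) else 0) ≤ 1 := by split_ifs <;> norm_num
    exact (hj i).trans (hxj.trans hind)
  refine ⟨fun i => ⟨hx0 i, hle_one i⟩, fun ε => ?_⟩
  obtain ⟨⟨⟨u, -, hua⟩, ⟨v, -, hav⟩⟩, ⟨u', -, hub⟩, ⟨v', -, hbv⟩⟩ := hgadget ε
  exact ⟨⟨(hx0 u).trans hua, hav.trans (hle_one v)⟩, (hx0 u').trans hub, hbv.trans (hle_one v')⟩
end

section
/- Let V be a finite vertex set, R ⊆ V, d_i > 0 for i ∈ V, γ > 0, and let 𝓔 be a finite collection of nonempty hyperedges e ⊆ V, each carrying positive weights w_{i a_e}, w_{b_e i} (i ∈ e) and w_{a_e b_e} and auxiliary values x_{a_e}, x_{b_e} ∈ ℝ. For arbitrary real values x_i (i ∈ V), define the residuals r_i (i ∈ V), r_{a_e} and r_{b_e} (e ∈ 𝓔) by r_i = (1/γ) Σ_{e: i∈e} w_{b_e i}(x_{b_e} − x_i)₊ − (1/γ) Σ_{e: i∈e} w_{i a_e}(x_i − x_{a_e})₊ + d_i(𝟙[i∈R] − x_i), r_{a_e} = −(1/γ)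 w_{a_e b_e}(x_{a_e} − x_{b_e})₊ + (1/γ) Σ_{v∈e} w_{v a_e}(x_v − x_{a_e})₊, and r_{b_e} = (1/γ) w_{a_e b_e}(x_{a_e} − x_{b_e})₊ − (1/γ) Σ_{v∈e} w_{b_e v}(x_{b_e} − x_v)₊, where (t)₊ = max{t,0}. Then Σ_{i∈V} r_i + Σ_{e∈𝓔} ( r_{a_e} + r_{b_e} ) = Σ_{i∈R} d_i(1 − x_i) − Σ_{i∈V∖R} d_i x_i. In particular, the total residual depends only on the values x_i at original nodes, so changing only the auxiliary values x_{a_e}, x_{b_e} leaves it unchanged. -/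
/-!
Every gadget edge carries one flux term, which enters the residual of its head with a plus sign
and the residual of its tail with a minus sign, so all flux terms cancel in the total residual;
only the source terms `d i (𝟙[i ∈ R] - x i)` of the original nodes survive.
-/

open Finset

theorem Finset.sum_sum_filter_mem_eq_sum_sum {V E M : Type*} [Fintype V] [Fintype E]
    [DecidableEq V] [AddCommMonoid M] (e : E → Finset V) (f : V → E → M) :
    ∑ i : V, ∑ ε ∈ univ.filter (fun ε => i ∈ e ε), f i ε = ∑ ε : E, ∑ v ∈ e ε, f v ε :=
  sum_comm' fun i ε => by simp

theorem Finset.sum_mul_ite_mem_sub {V α : Type*} [Fintype V] [DecidableEq V] [Ring α]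
    (R : Finset V) (d x : V → α) :
    ∑ i : V, d i * ((if i ∈ R then 1 else 0) - x i)
      = ∑ i ∈ R, d i * (1 - x i) - ∑ i ∈ Rᶜ, d i * x i := by
  rw [← sum_add_sum_compl R, sub_eq_add_neg, ← sum_neg_distrib]
  congr 1
  · exact sum_congr rfl fun i hi => by rw [if_pos hi]
  · exact sum_congr rfl fun i hi => by rw [if_neg (mem_compl.mp hi), zero_sub, mul_neg]

theorem residual_sum_identity_general {V E : Type*} [Fintype V] [Fintype E] [DecidableEq V]
    (R : Finset V) (d : V → ℝ) (γ : ℝ)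
    (e : E → Finset V)
    (wia : V → E → ℝ) (wbi : E → V → ℝ) (wab : E → ℝ)
    (x : V → ℝ) (xa xb : E → ℝ) :
    (∑ i : V,
        ((1 / γ) * ∑ ε ∈ univ.filter (fun ε => i ∈ e ε), wbi ε i * max (xb ε - x i) 0
          - (1 / γ) * ∑ ε ∈ univ.filter (fun ε => i ∈ e ε), wia i ε * max (x i - xa ε) 0
          + d i * ((if i ∈ R then 1 else 0) - x i)))
      + ∑ ε : E,
          ((-(1 / γ) * (wab ε * max (xa ε - xb ε) 0)
              + (1 / γ) * ∑ v ∈ e ε, wia v ε * max (x v - xa ε) 0)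
            + ((1 / γ) * (wab ε * max (xa ε - xb ε) 0)
              - (1 / γ) * ∑ v ∈ e ε, wbi ε v * max (xb ε - x v) 0))
      = ∑ i ∈ R, d i * (1 - x i) - ∑ i ∈ Rᶜ, d i * x i := by
  rw [sum_add_distrib, sum_sub_distrib, ← mul_sum, ← mul_sum,
    sum_sum_filter_mem_eq_sum_sum, sum_sum_filter_mem_eq_sum_sum, sum_mul_ite_mem_sub]
  simp only [sum_add_distrib, sum_sub_distrib, ← mul_sum]
  ring

/-- Total residual identity for the localized hypergraph diffusion: the sum of all
residuals (over original nodes and both auxiliary nodes of every hyperedge gadget)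
equals `Σ_{i∈R} d_i (1 − x_i) − Σ_{i∉R} d_i x_i`; in particular it depends only on the
values at the original nodes. -/
theorem residual_sum_identity {V E : Type*} [Fintype V] [Fintype E] [DecidableEq V]
    (R : Finset V) (d : V → ℝ) (hd : ∀ v, 0 < d v) (γ : ℝ) (hγ : 0 < γ)
    (e : E → Finset V) (he : ∀ ε, (e ε).Nonempty)
    (wia : V → E → ℝ) (wbi : E → V → ℝ) (wab : E → ℝ)
    (hwia : ∀ ε, ∀ v ∈ e ε, 0 < wia v ε) (hwbi : ∀ ε, ∀ v ∈ e ε, 0 < wbi ε v)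
    (hwab : ∀ ε, 0 < wab ε)
    (x : V → ℝ) (xa xb : E → ℝ) :
    (∑ i : V,
        ((1 / γ) * ∑ ε ∈ univ.filter (fun ε => i ∈ e ε), wbi ε i * max (xb ε - x i) 0
          - (1 / γ) * ∑ ε ∈ univ.filter (fun ε => i ∈ e ε), wia i ε * max (x i - xa ε) 0
          + d i * ((if i ∈ R then 1 else 0) - x i)))
      + ∑ ε : E,
          ((-(1 / γ) * (wab ε * max (xa ε - xb ε) 0)
              + (1 / γ) * ∑ v ∈ e ε, wia v ε * max (x v - xa ε) 0)
            + ((1 / γ) * (wab ε * max (xa ε - xb ε) 0)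
              - (1 / γ) * ∑ v ∈ e ε, wbi ε v * max (xb ε - x v) 0))
      = ∑ i ∈ R, d i * (1 - x i) - ∑ i ∈ Rᶜ, d i * x i :=
  residual_sum_identity_general R d γ e wia wbi wab x xa xb
end

section
/- Let γ, κ, δ, d_i > 0, 0 < ρ < 1, and χ ∈ {0,1}. Let (w_b, x_b)_{b∈B} and (w_a, x_a)_{a∈A} be finite families with all weights w_b, w_a > 0 and Σ_{b∈B} w_b + Σ_{a∈A} w_a ≤ δ d_i, and let x_i ∈ ℝ. Define, for Δ ≥ 0, g(Δ) = (1/γ) Σ_{b∈B} w_b (x_b − x_i − Δ)₊ − (1/γ) Σ_{a∈A} w_a (x_i + Δ − x_a)₊ + κ d_i (χ − x_i − Δ), where (t)₊ = max{t,0}. If g(0) > κ d_i and Δ* ≥ 0 satisfies g(Δ*) = ρ κ d_i, then Δ* > γκ(1−ρ)/(γκ + δ). Consequently, a hyperpush that raises x_i by Δ* decreases the total residual of the diffusion by at least γκ(1−ρ) d_i /(γκ + δ). -/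
/-!
Raising `x_i` by `Δ` changes each hinge term `w (t)₊` by at most `w Δ` and the last term by
exactly `κ d_i Δ`, so the residual drops by at most `(W/γ + κ d_i) Δ ≤ (δ/γ + κ) d_i Δ`, where
`W ≤ δ d_i` is the total gadget weight. The hyperpush must make the residual drop by more than
`(1 - ρ) κ d_i`, which forces `Δ* > γκ(1-ρ)/(γκ+δ)`.
-/

open Finset

lemma max_zero_le_max_zero_add {x y c : ℝ} (hxy : x ≤ y + c) (hc : 0 ≤ c) :
    max x 0 ≤ max y 0 + c :=
  max_le (by linarith [le_max_left y 0]) (by linarith [le_max_right y 0])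

lemma sum_mul_max_zero_sub_le {ι : Type*} (s : Finset ι) {w x y : ι → ℝ} {c : ℝ}
    (hw : ∀ i ∈ s, 0 ≤ w i) (hxy : ∀ i ∈ s, x i ≤ y i + c) (hc : 0 ≤ c) :
    ∑ i ∈ s, w i * max (x i) 0 - ∑ i ∈ s, w i * max (y i) 0 ≤ (∑ i ∈ s, w i) * c := by
  rw [← sum_sub_distrib, sum_mul]
  refine sum_le_sum fun i hi => ?_
  have := mul_le_mul_of_nonneg_left (max_zero_le_max_zero_add (hxy i hi) hc) (hw i hi)
  linarith

section Residual

variable {B A : Type*} [Fintype B] [Fintype A]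

noncomputable def hyperpushResidual (γ κ di χ xi : ℝ) (wb xb : B → ℝ) (wa xa : A → ℝ)
    (Δ : ℝ) : ℝ :=
  (1 / γ) * ∑ b, wb b * max (xb b - xi - Δ) 0
    - (1 / γ) * ∑ a, wa a * max (xi + Δ - xa a) 0 + κ * di * (χ - xi - Δ)

lemma hyperpushResidual_sub_le {γ κ di χ xi Δ : ℝ} {wb xb : B → ℝ} {wa xa : A → ℝ}
    (hγ : 0 < γ) (hwb : ∀ b, 0 ≤ wb b) (hwa : ∀ a, 0 ≤ wa a) (hΔ : 0 ≤ Δ) :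
    hyperpushResidual γ κ di χ xi wb xb wa xa 0 - hyperpushResidual γ κ di χ xi wb xb wa xa Δ
      ≤ ((∑ b, wb b + ∑ a, wa a) / γ + κ * di) * Δ := by
  have hB := sum_mul_max_zero_sub_le univ (fun b _ => hwb b) (c := Δ)
    (x := fun b => xb b - xi - 0) (y := fun b => xb b - xi - Δ) (fun b _ => by linarith) hΔ
  have hA := sum_mul_max_zero_sub_le univ (fun a _ => hwa a) (c := Δ)
    (x := fun a => xi + Δ - xa a) (y := fun a => xi + 0 - xa a) (fun a _ => by linarith) hΔ
  have hγ' : 0 ≤ 1 / γ := one_div_nonneg.2 hγ.le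
  have hB' := mul_le_mul_of_nonneg_left hB hγ'
  have hA' := mul_le_mul_of_nonneg_left hA hγ'
  simp only [hyperpushResidual]
  linear_combination hB' + hA'

end Residual

theorem hyperpush_progress_general {B A : Type*} [Fintype B] [Fintype A]
    (γ κ δ di ρ χ : ℝ)
    (hγ : 0 < γ) (hκ : 0 < κ) (hδ : 0 < δ) (hdi : 0 < di)
    (wb xb : B → ℝ) (wa xa : A → ℝ)
    (hwb : ∀ b, 0 < wb b) (hwa : ∀ a, 0 < wa a)
    (hwsum : ∑ b, wb b + ∑ a, wa a ≤ δ * di)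
    (xi : ℝ) (g : ℝ → ℝ)
    (hg : ∀ Δ, g Δ = (1 / γ) * ∑ b, wb b * max (xb b - xi - Δ) 0
        - (1 / γ) * ∑ a, wa a * max (xi + Δ - xa a) 0 + κ * di * (χ - xi - Δ))
    (h0 : κ * di < g 0)
    (Δs : ℝ) (hΔ0 : 0 ≤ Δs) (hΔ : g Δs = ρ * κ * di) :
    γ * κ * (1 - ρ) / (γ * κ + δ) < Δs ∧
      γ * κ * (1 - ρ) * di / (γ * κ + δ) ≤ di * Δs := by
  have hg' : g = hyperpushResidual γ κ di χ xi wb xb wa xa := funext hg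
  have hdrop : κ * di * (1 - ρ) < (δ * di / γ + κ * di) * Δs := calc
    κ * di * (1 - ρ) < g 0 - g Δs := by rw [hΔ]; linarith
    _ ≤ ((∑ b, wb b + ∑ a, wa a) / γ + κ * di) * Δs := by
      rw [hg']
      exact hyperpushResidual_sub_le hγ (fun b => (hwb b).le) (fun a => (hwa a).le) hΔ0
    _ ≤ (δ * di / γ + κ * di) * Δs := by gcongr
  have hΔs : γ * κ * (1 - ρ) / (γ * κ + δ) < Δs := by
    rw [div_lt_iff₀ (by positivity)]
    refine lt_of_mul_lt_mul_left (a := di / γ) ?_ (by positivity)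
    calc di / γ * (γ * κ * (1 - ρ)) = κ * di * (1 - ρ) := by field_simp
      _ < (δ * di / γ + κ * di) * Δs := hdrop
      _ = di / γ * (Δs * (γ * κ + δ)) := by field_simp; ring
  refine ⟨hΔs, ?_⟩
  rw [mul_div_right_comm, mul_comm _ di]
  exact mul_le_mul_of_nonneg_left hΔs.le hdi.le

/-- Per-iteration progress bound of an LHQD hyperpush: if the residual of node `i`
exceeds `κ d_i` and the hyperpush resets it to `ρ κ d_i` by raising `x_i` by `Δ*`,
then `Δ* > γκ(1-ρ)/(γκ+δ)`; consequently the total residual, which decreases by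
`d_i Δ*`, decreases by at least `γκ(1-ρ) d_i/(γκ+δ)`. -/
theorem hyperpush_progress {B A : Type*} [Fintype B] [Fintype A]
    (γ κ δ di ρ χ : ℝ)
    (hγ : 0 < γ) (hκ : 0 < κ) (hδ : 0 < δ) (hdi : 0 < di)
    (hρ0 : 0 < ρ) (hρ1 : ρ < 1) (hχ : χ = 0 ∨ χ = 1)
    (wb xb : B → ℝ) (wa xa : A → ℝ)
    (hwb : ∀ b, 0 < wb b) (hwa : ∀ a, 0 < wa a)
    (hwsum : ∑ b, wb b + ∑ a, wa a ≤ δ * di)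
    (xi : ℝ) (g : ℝ → ℝ)
    (hg : ∀ Δ, g Δ = (1 / γ) * ∑ b, wb b * max (xb b - xi - Δ) 0
        - (1 / γ) * ∑ a, wa a * max (xi + Δ - xa a) 0 + κ * di * (χ - xi - Δ))
    (h0 : κ * di < g 0)
    (Δs : ℝ) (hΔ0 : 0 ≤ Δs) (hΔ : g Δs = ρ * κ * di) :
    γ * κ * (1 - ρ) / (γ * κ + δ) < Δs ∧
      γ * κ * (1 - ρ) * di / (γ * κ + δ) ≤ di * Δs :=
  hyperpush_progress_general γ κ δ di ρ χ hγ hκ hδ hdi wb xb wa xa hwb hwa hwsum xi g hg h0 Δs hΔ0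
    hΔ
end

section
/- Let γ, κ, d_i > 0, 0 < ρ < 1, and χ ∈ {0,1}. Let (w_b, x_b)_{b∈B} and (w_a, x_a)_{a∈A} be finite families with all weights w_b, w_a > 0 and all values x_b, x_a ∈ [0,1], and let x_i ∈ [0,1]. Define, for Δ ∈ ℝ, g(Δ) = (1/γ) Σ_{b∈B} w_b (x_b − x_i − Δ)₊ − (1/γ) Σ_{a∈A} w_a (x_i + Δ − x_a)₊ + κ d_i (χ − x_i − Δ), where (t)₊ = max{t,0}. Then g is continuous and strictly decreasing, g(1) ≤ 0, and if g(0) > κ d_i, there exists exactly one Δ* with g(Δ*) = ρ κ d_i, and this Δ* lies in the open interval (0, 1). -/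
/-!
The positive-part sums make `g` antitone and the term `-κ dᵢ Δ` makes it strictly decreasing.
At `Δ = 1` every `B`-term vanishes since `x_b ≤ 1 ≤ xᵢ + 1`, so `g 1 ≤ 0 < ρ κ dᵢ < κ dᵢ < g 0`,
and the intermediate value theorem gives the unique solution, necessarily strictly between `0` and `1`.
-/

open Set

theorem StrictAnti.existsUnique_eq_and_mem_Ioo {α δ : Type*} [ConditionallyCompleteLinearOrder α]
    [TopologicalSpace α] [OrderTopology α] [DenselyOrdered α] [LinearOrder δ]
    [TopologicalSpace δ] [OrderClosedTopology δ] {f : α → δ} {a b : α} {y : δ}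
    (hf : StrictAnti f) (hfc : ContinuousOn f (Icc a b)) (hb : f b < y) (ha : y < f a) :
    (∃! x, f x = y) ∧ ∀ x, f x = y → x ∈ Ioo a b := by
  obtain ⟨x, -, hx⟩ :=
    intermediate_value_Icc' (hf.lt_iff_gt.1 (hb.trans ha)).le hfc ⟨hb.le, ha.le⟩
  refine ⟨⟨x, hx, fun x' hx' => hf.injective (hx'.trans hx.symm)⟩, fun x' hx' => ?_⟩
  subst hx'
  exact ⟨hf.lt_iff_gt.1 ha, hf.lt_iff_gt.1 hb⟩

theorem hyperpush_unique_general {B A : Type*} [Fintype B] [Fintype A]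
    (γ κ di ρ χ : ℝ)
    (hγ : 0 < γ) (hκ : 0 < κ) (hdi : 0 < di)
    (hρ0 : 0 < ρ) (hρ1 : ρ < 1) (hχ : χ = 0 ∨ χ = 1)
    (wb xb : B → ℝ) (wa xa : A → ℝ)
    (hwb : ∀ b, 0 < wb b) (hwa : ∀ a, 0 < wa a)
    (hxb : ∀ b, xb b ∈ Set.Icc (0 : ℝ) 1)
    (xi : ℝ) (hxi : xi ∈ Set.Icc (0 : ℝ) 1)
    (g : ℝ → ℝ)
    (hg : ∀ Δ, g Δ = (1 / γ) * ∑ b, wb b * max (xb b - xi - Δ) 0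
        - (1 / γ) * ∑ a, wa a * max (xi + Δ - xa a) 0 + κ * di * (χ - xi - Δ)) :
    Continuous g ∧ StrictAnti g ∧ g 1 ≤ 0 ∧
      (κ * di < g 0 →
        (∃! Δ : ℝ, g Δ = ρ * κ * di) ∧
          ∀ Δ : ℝ, g Δ = ρ * κ * di → Δ ∈ Set.Ioo (0 : ℝ) 1) := by
  have hκd : 0 < κ * di := mul_pos hκ hdi
  have hcont : Continuous g := by
    rw [funext hg]
    fun_prop
  have hanti : StrictAnti g := fun x y hxy => by
    rw [hg, hg]
    refine add_lt_add_of_le_of_lt (sub_le_sub ?_ ?_) (by gcongr)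
    · gcongr with b; exact (hwb b).le
    · gcongr with a; exact (hwa a).le
  have hg1 : g 1 ≤ 0 := by
    have hB : ∀ b, max (xb b - xi - 1) 0 = 0 := fun b =>
      max_eq_right (by linarith [(hxb b).2, hxi.1])
    have hA : 0 ≤ ∑ a, wa a * max (xi + 1 - xa a) 0 :=
      Finset.sum_nonneg fun a _ => mul_nonneg (hwa a).le (le_max_right _ _)
    have hχ1 : χ - xi - 1 ≤ 0 := by rcases hχ with rfl | rfl <;> linarith [hxi.1]
    rw [hg]
    simp only [hB, mul_zero, Finset.sum_const_zero]
    linarith [mul_nonneg (one_div_pos.2 hγ).le hA, mul_nonpos_of_nonneg_of_nonpos hκd.le hχ1]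
  refine ⟨hcont, hanti, hg1, fun h0 => hanti.existsUnique_eq_and_mem_Ioo hcont.continuousOn ?_ ?_⟩
  · exact hg1.trans_lt (by positivity)
  · calc ρ * κ * di = ρ * (κ * di) := mul_assoc ..
      _ < κ * di := mul_lt_of_lt_one_left hκd hρ1
      _ < g 0 := h0

/-- Existence and uniqueness of the push amount in an LHQD hyperpush: the post-push
residual function `g` is continuous and strictly decreasing, satisfies `g 1 ≤ 0`, and
if `g 0 > κ d_i` then there is exactly one `Δ*` with `g Δ* = ρ κ d_i`, and it lies in
the open interval `(0,1)`. -/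
theorem hyperpush_unique {B A : Type*} [Fintype B] [Fintype A]
    (γ κ di ρ χ : ℝ)
    (hγ : 0 < γ) (hκ : 0 < κ) (hdi : 0 < di)
    (hρ0 : 0 < ρ) (hρ1 : ρ < 1) (hχ : χ = 0 ∨ χ = 1)
    (wb xb : B → ℝ) (wa xa : A → ℝ)
    (hwb : ∀ b, 0 < wb b) (hwa : ∀ a, 0 < wa a)
    (hxb : ∀ b, xb b ∈ Set.Icc (0 : ℝ) 1) (hxa : ∀ a, xa a ∈ Set.Icc (0 : ℝ) 1)
    (xi : ℝ) (hxi : xi ∈ Set.Icc (0 : ℝ) 1)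
    (g : ℝ → ℝ)
    (hg : ∀ Δ, g Δ = (1 / γ) * ∑ b, wb b * max (xb b - xi - Δ) 0
        - (1 / γ) * ∑ a, wa a * max (xi + Δ - xa a) 0 + κ * di * (χ - xi - Δ)) :
    Continuous g ∧ StrictAnti g ∧ g 1 ≤ 0 ∧
      (κ * di < g 0 →
        (∃! Δ : ℝ, g Δ = ρ * κ * di) ∧
          ∀ Δ : ℝ, g Δ = ρ * κ * di → Δ ∈ Set.Ioo (0 : ℝ) 1) :=
  hyperpush_unique_general γ κ di ρ χ hγ hκ hdi hρ0 hρ1 hχ wb xb wa xa hwb hwa hxb xi hxi g hg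
end

section
/- Let H = (V,𝓔) be a hypergraph as above and γ > 0. For every set S ⊆ V with 0 < vol(S) ≤ M/2, the minimizer x(γ,S) of Q satisfies p(γ,S)(S) = Σ_{v∈S} d_v x_v(γ,S) ≥ 1 − φ(S)/γ. -/
/-! A minimiser `x` of `Q` takes its values in `[0, 1 / vol S]`: clipping a vector to that interval
does not increase any `Q_e` and strictly decreases the seed term unless nothing moves. For such `x`,
compare `Q` at `x` and at `x + t 1_S` (`t > 0`). The seed term grows by exactly
`γ (2t (p(S) − 1) + t² vol S)`. Each `Q_e` grows by at most `(2t / vol S + t²) f_e(S)`: given gadget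
values `a, b ∈ [0, 1 / vol S]`, keep them (paying on `e ∩ S`), shift both by `t` (paying on `e ∖ S`)
or shift only `a` (paying `δ_e`). Minimality of `x` and `t → 0⁺` give
`γ (1 − p(S)) ≤ cut(S) / vol(S) = φ(S)`. -/

open Finset

noncomputable section

/-- δ-linear splitting penalty of the set `S` within hyperedge `ε`:
`f_ε(e_ε ∩ S) = min {|e_ε ∩ S|, |e_ε ∖ S|, δ_ε}`. -/
def hsplit {V E : Type*} [DecidableEq V] (e : E → Finset V) (δe : E → ℝ)
    (ε : E) (S : Finset V) : ℝ :=
  min (min ((e ε ∩ S).card : ℝ) ((e ε \ S).card : ℝ)) (δe ε)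

/-- Hypergraph cut `cut_H(S) = Σ_ε f_ε(e_ε ∩ S)`. -/
def hcut {V E : Type*} [Fintype E] [DecidableEq V] (e : E → Finset V) (δe : E → ℝ)
    (S : Finset V) : ℝ :=
  ∑ ε : E, hsplit e δe ε S

/-- Degree `d_v = Σ_{ε : v ∈ e_ε} f_ε({v})`. -/
def hdeg {V E : Type*} [Fintype E] [DecidableEq V] (e : E → Finset V) (δe : E → ℝ)
    (v : V) : ℝ :=
  ∑ ε ∈ univ.filter (fun ε => v ∈ e ε), hsplit e δe ε {v}

/-- Volume `vol(S) = Σ_{v∈S} d_v`. -/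
def hvol {V E : Type*} [Fintype E] [DecidableEq V] (e : E → Finset V) (δe : E → ℝ)
    (S : Finset V) : ℝ :=
  ∑ v ∈ S, hdeg e δe v

/-- Total volume `M = vol(V)`. -/
def hM {V E : Type*} [Fintype V] [Fintype E] [DecidableEq V] (e : E → Finset V)
    (δe : E → ℝ) : ℝ :=
  hvol e δe univ

/-- Hypergraph conductance `φ(S) = cut_H(S) / min(vol S, M − vol S)`. -/
def hcond {V E : Type*} [Fintype V] [Fintype E] [DecidableEq V] (e : E → Finset V)
    (δe : E → ℝ) (S : Finset V) : ℝ :=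
  hcut e δe S / min (hvol e δe S) (hM e δe - hvol e δe S)

/-- Inner gadget objective of hyperedge `ε`:
`Σ_{v∈e_ε} ((x_v−a)₊² + (b−x_v)₊²) + δ_ε (a−b)₊²`. -/
def innerQ {V E : Type*} [DecidableEq V] (e : E → Finset V) (δe : E → ℝ) (ε : E)
    (x : V → ℝ) (a b : ℝ) : ℝ :=
  ∑ v ∈ e ε, ((max (x v - a) 0) ^ 2 + (max (b - x v) 0) ^ 2)
    + δe ε * (max (a - b) 0) ^ 2

/-- `Q_ε(x) = min_{a,b∈ℝ} innerQ`. -/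
def Qe {V E : Type*} [DecidableEq V] (e : E → Finset V) (δe : E → ℝ) (ε : E)
    (x : V → ℝ) : ℝ :=
  sInf {q : ℝ | ∃ a b : ℝ, q = innerQ e δe ε x a b}

/-- The diffusion objective
`Q(x) = γ Σ_v d_v (x_v − 1_S(v)/vol S)² + Σ_ε Q_ε(x)` for a seed set `S`. -/
def Qobj {V E : Type*} [Fintype V] [Fintype E] [DecidableEq V] (e : E → Finset V)
    (δe : E → ℝ) (γ : ℝ) (S : Finset V) (x : V → ℝ) : ℝ :=
  γ * ∑ v : V, hdeg e δe v * (x v - (if v ∈ S then 1 else 0) / hvol e δe S) ^ 2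
    + ∑ ε : E, Qe e δe ε x

end

open Filter Topology

section PositivePart

lemma max_zero_sq_le_max_zero_sq {u v : ℝ} (h : u ≤ v) : max u 0 ^ 2 ≤ max v 0 ^ 2 :=
  pow_le_pow_left₀ (le_max_right u 0) (max_le_max_right 0 h) 2

lemma max_add_zero_sq_le {u t c : ℝ} (ht : 0 ≤ t) (hu : max u 0 ≤ c) :
    max (u + t) 0 ^ 2 ≤ max u 0 ^ 2 + (2 * t * c + t ^ 2) := by
  have h : max (u + t) 0 ≤ max u 0 + t :=
    max_le (by linarith [le_max_left u 0]) (by linarith [le_max_right u 0])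
  nlinarith [le_max_right (u + t) 0, le_max_right u 0]

lemma nonneg_of_forall_pos_nonneg_mul_add_mul_sq {α β : ℝ}
    (h : ∀ t > 0, 0 ≤ α * t + β * t ^ 2) : 0 ≤ α := by
  have hlin : ∀ t > 0, 0 ≤ α + β * t := fun t ht =>
    nonneg_of_mul_nonneg_right (by linear_combination h t ht) ht
  have hlim : Tendsto (fun t => α + β * t) (𝓝[>] 0) (𝓝 α) := by
    have : Tendsto (fun t => α + β * t) (𝓝 0) (𝓝 (α + β * 0)) :=
      (continuous_const.add (continuous_const.mul continuous_id)).tendsto 0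
    simpa using this.mono_left nhdsWithin_le_nhds
  exact ge_of_tendsto hlim (eventually_nhdsWithin_of_forall hlin)

end PositivePart

section Clip

variable {a b : ℝ}

lemma max_projIcc_sub_projIcc_sq_le (hab : a ≤ b) (u v : ℝ) :
    max ((Set.projIcc a b hab u : ℝ) - Set.projIcc a b hab v) 0 ^ 2 ≤ max (u - v) 0 ^ 2 := by
  refine pow_le_pow_left₀ (le_max_right _ _) (max_le ?_ (le_max_right _ _)) 2
  rcases le_total u v with huv | hvu
  · have : (Set.projIcc a b hab u : ℝ) ≤ Set.projIcc a b hab v := Set.monotone_projIcc hab huv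
    linarith [le_max_right (u - v) 0]
  · calc (Set.projIcc a b hab u : ℝ) - Set.projIcc a b hab v
        ≤ |(Set.projIcc a b hab u : ℝ) - Set.projIcc a b hab v| := le_abs_self _
      _ ≤ |u - v| := Set.abs_projIcc_sub_projIcc hab
      _ = u - v := abs_of_nonneg (sub_nonneg.mpr hvu)
      _ ≤ max (u - v) 0 := le_max_left _ _

lemma sq_projIcc_sub_le (hab : a ≤ b) {y : ℝ} (hy : y ∈ Set.Icc a b) (u : ℝ) :
    ((Set.projIcc a b hab u : ℝ) - y) ^ 2 ≤ (u - y) ^ 2 := by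
  rw [sq_le_sq]
  simpa [Set.projIcc_of_mem hab hy] using Set.abs_projIcc_sub_projIcc hab (c := u) (d := y)

lemma sq_projIcc_sub_lt (hab : a ≤ b) {y u : ℝ} (hy : y ∈ Set.Icc a b)
    (hu : u ∉ Set.Icc a b) :
    ((Set.projIcc a b hab u : ℝ) - y) ^ 2 < (u - y) ^ 2 := by
  obtain ⟨hay, hyb⟩ := hy
  rcases not_and_or.mp hu with hua | hub
  · rw [Set.projIcc_of_le_left hab (not_le.mp hua).le]
    nlinarith [not_le.mp hua]
  · rw [Set.projIcc_of_right_le hab (not_le.mp hub).le]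
    nlinarith [not_le.mp hub]

end Clip

lemma sum_le_sum_add_mul_card_filter {ι : Type*} {s : Finset ι} {f g : ι → ℝ} {C : ℝ}
    (p : ι → Prop) [DecidablePred p] (hp : ∀ i ∈ s, p i → f i ≤ g i + C)
    (hnp : ∀ i ∈ s, ¬ p i → f i ≤ g i) :
    ∑ i ∈ s, f i ≤ ∑ i ∈ s, g i + C * #(s.filter p) := by
  calc ∑ i ∈ s, f i ≤ ∑ i ∈ s, (g i + if p i then C else 0) := by
        refine sum_le_sum fun i hi => ?_
        split_ifs with h
        · exact hp i hi h
        · simpa using hnp i hi h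
    _ = ∑ i ∈ s, g i + C * #(s.filter p) := by
        rw [sum_add_distrib, ← sum_filter, sum_const, nsmul_eq_mul, mul_comm]

section EdgeGadget

variable {V E : Type*} [DecidableEq V] (e : E → Finset V) (δe : E → ℝ) (ε : E)

lemma innerQ_nonneg (hδ : 0 ≤ δe ε) (x : V → ℝ) (a b : ℝ) : 0 ≤ innerQ e δe ε x a b :=
  add_nonneg (sum_nonneg fun _ _ => by positivity) (mul_nonneg hδ (sq_nonneg _))

lemma Qe_le_innerQ (hδ : 0 ≤ δe ε) (x : V → ℝ) (a b : ℝ) :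
    Qe e δe ε x ≤ innerQ e δe ε x a b :=
  csInf_le ⟨0, by rintro _ ⟨a, b, rfl⟩; exact innerQ_nonneg e δe ε hδ x a b⟩ ⟨a, b, rfl⟩

lemma Qe_le_Qe_add {x y : V → ℝ} {K : ℝ}
    (h : ∀ a b, Qe e δe ε y ≤ innerQ e δe ε x a b + K) : Qe e δe ε y ≤ Qe e δe ε x + K := by
  have : Qe e δe ε y - K ≤ Qe e δe ε x :=
    le_csInf ⟨_, 0, 0, rfl⟩ (by rintro _ ⟨a, b, rfl⟩; linarith [h a b])
  linarith

lemma innerQ_projIcc_le (hδ : 0 ≤ δe ε) {lo hi : ℝ} (h : lo ≤ hi) (x : V → ℝ) (a b : ℝ) :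
    innerQ e δe ε (fun v => Set.projIcc lo hi h (x v)) (Set.projIcc lo hi h a)
      (Set.projIcc lo hi h b) ≤ innerQ e δe ε x a b :=
  add_le_add
    (sum_le_sum fun _ _ => add_le_add (max_projIcc_sub_projIcc_sq_le h _ _)
      (max_projIcc_sub_projIcc_sq_le h _ _))
    (mul_le_mul_of_nonneg_left (max_projIcc_sub_projIcc_sq_le h a b) hδ)

lemma Qe_projIcc_le (hδ : 0 ≤ δe ε) {lo hi : ℝ} (h : lo ≤ hi) (x : V → ℝ) :
    Qe e δe ε (fun v => Set.projIcc lo hi h (x v)) ≤ Qe e δe ε x := by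
  have := Qe_le_Qe_add e δe ε (K := 0) fun a b => by
    rw [add_zero]
    exact (Qe_le_innerQ e δe ε hδ _ _ _).trans (innerQ_projIcc_le e δe ε hδ h x a b)
  rwa [add_zero] at this

variable {x : V → ℝ} {a b c t : ℝ} (S : Finset V)

lemma innerQ_shift_le_card_inter (ht : 0 ≤ t) (hxa : ∀ v, max (x v - a) 0 ≤ c) :
    innerQ e δe ε (fun v => x v + if v ∈ S then t else 0) a b
      ≤ innerQ e δe ε x a b + (2 * t * c + t ^ 2) * #(e ε ∩ S) := by
  have hsum := sum_le_sum_add_mul_card_filter (s := e ε) (C := 2 * t * c + t ^ 2)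
    (f := fun v => max ((x v + if v ∈ S then t else 0) - a) 0 ^ 2
      + max (b - (x v + if v ∈ S then t else 0)) 0 ^ 2)
    (g := fun v => max (x v - a) 0 ^ 2 + max (b - x v) 0 ^ 2) (· ∈ S) (fun v _ hv => ?_)
    (fun _ _ hv => by simp [hv])
  · rw [filter_mem_eq_inter] at hsum
    simp only [innerQ]
    linarith
  have h₁ : max (x v + t - a) 0 ^ 2 ≤ max (x v - a) 0 ^ 2 + (2 * t * c + t ^ 2) := by
    rw [add_sub_right_comm]
    exact max_add_zero_sq_le ht (hxa v)
  have h₂ : max (b - (x v + t)) 0 ^ 2 ≤ max (b - x v) 0 ^ 2 :=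
    max_zero_sq_le_max_zero_sq (by linarith)
  simp only [hv, if_true]
  linarith

lemma innerQ_shift_le_card_sdiff (ht : 0 ≤ t) (hbx : ∀ v, max (b - x v) 0 ≤ c) :
    innerQ e δe ε (fun v => x v + if v ∈ S then t else 0) (a + t) (b + t)
      ≤ innerQ e δe ε x a b + (2 * t * c + t ^ 2) * #(e ε \ S) := by
  have hsum := sum_le_sum_add_mul_card_filter (s := e ε) (C := 2 * t * c + t ^ 2)
    (f := fun v => max ((x v + if v ∈ S then t else 0) - (a + t)) 0 ^ 2
      + max (b + t - (x v + if v ∈ S then t else 0)) 0 ^ 2)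
    (g := fun v => max (x v - a) 0 ^ 2 + max (b - x v) 0 ^ 2) (· ∉ S) (fun v _ hv => ?_)
    (fun _ _ hv => by simp [not_not.mp hv])
  · rw [← sdiff_eq_filter] at hsum
    simp only [innerQ, add_sub_add_right_eq_sub]
    linarith
  have h₁ : max (x v - (a + t)) 0 ^ 2 ≤ max (x v - a) 0 ^ 2 :=
    max_zero_sq_le_max_zero_sq (by linarith)
  have h₂ : max (b + t - x v) 0 ^ 2 ≤ max (b - x v) 0 ^ 2 + (2 * t * c + t ^ 2) := by
    rw [add_sub_right_comm]
    exact max_add_zero_sq_le ht (hbx v)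
  simp only [hv, if_false, add_zero]
  linarith

lemma innerQ_shift_le_delta (hδ : 0 ≤ δe ε) (ht : 0 ≤ t) (hab : max (a - b) 0 ≤ c) :
    innerQ e δe ε (fun v => x v + if v ∈ S then t else 0) (a + t) b
      ≤ innerQ e δe ε x a b + (2 * t * c + t ^ 2) * δe ε := by
  have hsum : ∑ v ∈ e ε, (max ((x v + if v ∈ S then t else 0) - (a + t)) 0 ^ 2
        + max (b - (x v + if v ∈ S then t else 0)) 0 ^ 2)
      ≤ ∑ v ∈ e ε, (max (x v - a) 0 ^ 2 + max (b - x v) 0 ^ 2) := by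
    refine sum_le_sum fun v _ => add_le_add (max_zero_sq_le_max_zero_sq ?_)
      (max_zero_sq_le_max_zero_sq ?_) <;> split_ifs <;> linarith
  have hgap : δe ε * max (a + t - b) 0 ^ 2
      ≤ δe ε * max (a - b) 0 ^ 2 + (2 * t * c + t ^ 2) * δe ε := by
    rw [add_sub_right_comm]
    nlinarith [mul_le_mul_of_nonneg_left (max_add_zero_sq_le ht hab) hδ]
  simp only [innerQ]
  linarith

lemma Qe_shift_le_innerQ (hδ : 0 ≤ δe ε) (ht : 0 ≤ t) (hx : ∀ v, x v ∈ Set.Icc 0 c)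
    (ha : a ∈ Set.Icc 0 c) (hb : b ∈ Set.Icc 0 c) :
    Qe e δe ε (fun v => x v + if v ∈ S then t else 0)
      ≤ innerQ e δe ε x a b + (2 * t * c + t ^ 2) * hsplit e δe ε S := by
  have hc : 0 ≤ c := ha.1.trans ha.2
  have hC : 0 ≤ 2 * t * c + t ^ 2 := by positivity
  rw [hsplit, mul_min_of_nonneg _ _ hC, mul_min_of_nonneg _ _ hC, ← min_add_add_left,
    ← min_add_add_left]
  refine le_min (le_min ?_ ?_) ?_
  · exact (Qe_le_innerQ e δe ε hδ _ _ _).trans (innerQ_shift_le_card_inter e δe ε S ht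
      fun v => max_le (by linarith [(hx v).2, ha.1]) hc)
  · exact (Qe_le_innerQ e δe ε hδ _ _ _).trans (innerQ_shift_le_card_sdiff e δe ε S ht
      fun v => max_le (by linarith [(hx v).1, hb.2]) hc)
  · exact (Qe_le_innerQ e δe ε hδ _ _ _).trans (innerQ_shift_le_delta e δe ε S hδ ht
      (max_le (by linarith [ha.2, hb.1]) hc))

lemma Qe_shift_le (hδ : 0 ≤ δe ε) (ht : 0 ≤ t) (hc : 0 ≤ c) (hx : ∀ v, x v ∈ Set.Icc 0 c) :
    Qe e δe ε (fun v => x v + if v ∈ S then t else 0)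
      ≤ Qe e δe ε x + (2 * t * c + t ^ 2) * hsplit e δe ε S := by
  refine Qe_le_Qe_add e δe ε fun a b => ?_
  have hclip : (fun v => (Set.projIcc 0 c hc (x v) : ℝ)) = x :=
    funext fun v => by rw [Set.projIcc_of_mem hc (hx v)]
  have := innerQ_projIcc_le e δe ε hδ hc x a b
  rw [hclip] at this
  linarith [Qe_shift_le_innerQ e δe ε S hδ ht hx (Set.projIcc 0 c hc a).2
    (Set.projIcc 0 c hc b).2]

end EdgeGadget

section Hypergraph

variable {V E : Type*} [DecidableEq V] {e : E → Finset V} {δe : E → ℝ}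

lemma hsplit_singleton {ε : E} (hcard : 2 ≤ #(e ε)) (hδ : 1 ≤ δe ε) {v : V} (hv : v ∈ e ε) :
    hsplit e δe ε {v} = 1 := by
  have hsub : {v} ⊆ e ε := singleton_subset_iff.mpr hv
  have hrest : (1 : ℝ) ≤ #(e ε \ {v}) := by
    rw [card_sdiff_of_subset hsub, card_singleton]
    exact_mod_cast (by omega : 1 ≤ #(e ε) - 1)
  rw [hsplit, inter_eq_right.mpr hsub, card_singleton, Nat.cast_one, min_eq_left hrest,
    min_eq_left hδ]

variable [Fintype E]

lemma hdeg_eq_card (hcard : ∀ ε, 2 ≤ #(e ε)) (hδe : ∀ ε, 1 ≤ δe ε) (v : V) :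
    hdeg e δe v = #{ε | v ∈ e ε} := by
  rw [hdeg, sum_congr rfl fun ε hε => hsplit_singleton (hcard ε) (hδe ε) (mem_filter.mp hε).2,
    sum_const, nsmul_one]

lemma hdeg_pos (hcard : ∀ ε, 2 ≤ #(e ε)) (hδe : ∀ ε, 1 ≤ δe ε) {v : V} (hv : ∃ ε, v ∈ e ε) :
    0 < hdeg e δe v := by
  obtain ⟨ε, hε⟩ := hv
  rw [hdeg_eq_card hcard hδe]
  exact_mod_cast card_pos.mpr ⟨ε, mem_filter.mpr ⟨mem_univ ε, hε⟩⟩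

lemma hcond_eq_of_le_half [Fintype V] {S : Finset V} (h : hvol e δe S ≤ hM e δe / 2) :
    hcond e δe S = hcut e δe S / hvol e δe S := by
  rw [hcond, min_eq_left (by linarith)]

lemma seed_mem_Icc (hS : 0 < hvol e δe S) (v : V) :
    (if v ∈ S then 1 else 0) / hvol e δe S ∈ Set.Icc 0 (hvol e δe S)⁻¹ := by
  split_ifs <;> simp [hS.le]

end Hypergraph

section Diffusion

variable {V E : Type*} [Fintype V] [Fintype E] [DecidableEq V] {e : E → Finset V}
  {δe : E → ℝ} {γ : ℝ} {S : Finset V}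

lemma Qobj_projIcc_lt (hd : ∀ v, 0 < hdeg e δe v) (hδ : ∀ ε, 0 ≤ δe ε) (hγ : 0 < γ)
    (hS : 0 < hvol e δe S) {x : V → ℝ} {w : V} (hw : x w ∉ Set.Icc 0 (hvol e δe S)⁻¹) :
    Qobj e δe γ S (fun v => Set.projIcc 0 (hvol e δe S)⁻¹ (inv_nonneg.mpr hS.le) (x v))
      < Qobj e δe γ S x := by
  have hc := inv_nonneg.mpr hS.le
  have hseed : ∑ v, hdeg e δe v
        * ((Set.projIcc 0 _ hc (x v) : ℝ) - (if v ∈ S then 1 else 0) / hvol e δe S) ^ 2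
      < ∑ v, hdeg e δe v * (x v - (if v ∈ S then 1 else 0) / hvol e δe S) ^ 2 :=
    sum_lt_sum (fun v _ => mul_le_mul_of_nonneg_left
        (sq_projIcc_sub_le hc (seed_mem_Icc hS v) _) (hd v).le)
      ⟨w, mem_univ w, mul_lt_mul_of_pos_left
        (sq_projIcc_sub_lt hc (seed_mem_Icc hS w) hw) (hd w)⟩
  have hedges := sum_le_sum fun ε (_ : ε ∈ univ) => Qe_projIcc_le e δe ε (hδ ε) hc x
  simp only [Qobj]
  linarith [mul_lt_mul_of_pos_left hseed hγ]

lemma Qobj_minimizer_mem_Icc (hd : ∀ v, 0 < hdeg e δe v) (hδ : ∀ ε, 0 ≤ δe ε)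
    (hγ : 0 < γ) (hS : 0 < hvol e δe S) {x : V → ℝ}
    (hx : ∀ y, Qobj e δe γ S x ≤ Qobj e δe γ S y) (v : V) :
    x v ∈ Set.Icc 0 (hvol e δe S)⁻¹ :=
  by_contra fun hv => (hx _).not_gt (Qobj_projIcc_lt hd hδ hγ hS hv)

lemma sum_hdeg_mul_shift_sub_seed_sq (hS : hvol e δe S ≠ 0) (x : V → ℝ) (t : ℝ) :
    ∑ v, hdeg e δe v
        * (x v + (if v ∈ S then t else 0) - (if v ∈ S then 1 else 0) / hvol e δe S) ^ 2
      = ∑ v, hdeg e δe v * (x v - (if v ∈ S then 1 else 0) / hvol e δe S) ^ 2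
        + (2 * t * (∑ v ∈ S, hdeg e δe v * x v - 1) + t ^ 2 * hvol e δe S) := by
  rw [← sub_eq_iff_eq_add', ← sum_sub_distrib]
  calc _ = ∑ v, if v ∈ S then 2 * t * (hdeg e δe v * x v) + (t ^ 2 - 2 * t / hvol e δe S)
        * hdeg e δe v else 0 := sum_congr rfl fun v _ => by split_ifs <;> ring
    _ = _ := by
      rw [sum_ite_mem, univ_inter, sum_add_distrib, ← mul_sum, ← mul_sum]
      change _ + _ * hvol e δe S = _
      field_simp
      ring

lemma Qobj_shift_le (hδ : ∀ ε, 0 ≤ δe ε) (hS : 0 < hvol e δe S) {x : V → ℝ}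
    (hx : ∀ v, x v ∈ Set.Icc 0 (hvol e δe S)⁻¹) {t : ℝ} (ht : 0 ≤ t) :
    Qobj e δe γ S (fun v => x v + if v ∈ S then t else 0)
      ≤ Qobj e δe γ S x + γ * (2 * t * (∑ v ∈ S, hdeg e δe v * x v - 1) + t ^ 2 * hvol e δe S)
        + (2 * t * (hvol e δe S)⁻¹ + t ^ 2) * hcut e δe S := by
  have hedges := sum_le_sum fun ε (_ : ε ∈ univ) =>
    Qe_shift_le e δe ε S (hδ ε) ht (inv_nonneg.mpr hS.le) hx
  rw [sum_add_distrib, ← mul_sum] at hedges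
  simp only [Qobj, sum_hdeg_mul_shift_sub_seed_sq hS.ne']
  rw [hcut]
  linarith

end Diffusion

/-- Seed-mass lower bound: for a seed set `S` with `0 < vol S ≤ M/2`, the minimizer
`x = x(γ,S)` of the diffusion objective satisfies
`p(γ,S)(S) = Σ_{v∈S} d_v x_v ≥ 1 − φ(S)/γ`. -/
theorem seed_mass_lower_bound {V E : Type*} [Fintype V] [Fintype E] [DecidableEq V]
    (e : E → Finset V) (δe : E → ℝ)
    (hcard : ∀ ε, 2 ≤ (e ε).card) (hδe : ∀ ε, 1 ≤ δe ε)
    (hcov : ∀ v : V, ∃ ε, v ∈ e ε)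
    (γ : ℝ) (hγ : 0 < γ)
    (S : Finset V) (hS0 : 0 < hvol e δe S) (hS2 : hvol e δe S ≤ hM e δe / 2)
    (x : V → ℝ) (hx : ∀ y : V → ℝ, Qobj e δe γ S x ≤ Qobj e δe γ S y) :
    1 - hcond e δe S / γ ≤ ∑ v ∈ S, hdeg e δe v * x v := by
  have hd : ∀ v, 0 < hdeg e δe v := fun v => hdeg_pos hcard hδe (hcov v)
  have hδ : ∀ ε, 0 ≤ δe ε := fun ε => zero_le_one.trans (hδe ε)
  have hbox := Qobj_minimizer_mem_Icc hd hδ hγ hS0 hx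
  have hfirst :
      0 ≤ 2 * (γ * (∑ v ∈ S, hdeg e δe v * x v - 1) + (hvol e δe S)⁻¹ * hcut e δe S) :=
    nonneg_of_forall_pos_nonneg_mul_add_mul_sq (β := γ * hvol e δe S + hcut e δe S)
      fun t ht => by linear_combination (hx _).trans (Qobj_shift_le hδ hS0 hbox ht.le)
  rw [hcond_eq_of_le_half hS2, sub_le_comm, le_div_iff₀ hγ, div_eq_inv_mul]
  linarith
end

section
/- Let H = (V,𝓔) be a hypergraph as above, γ > 0, c > 0, and S ⊆ V with 0 < vol(S) ≤ M/2. Let v be a random vertex drawn from a probability distribution ℙ supported on S such that E_{v∼ℙ}[ p(γ,{v})(V∖S) ] ≤ c · p(γ,S)(V∖S). Then with probability at least 1/2 over v ∼ ℙ, p(γ,{v})(S) ≥ 1 − 2c φ(S)/γ. -/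
open Finset

/-!
Each diffusion vector `x` (minimiser of `Qobj` for a seed `T`) is nonnegative, since truncating at
`0` lowers every term of `Qobj`, and has total mass `∑ d_v x_v = 1`, since the gadget terms `Q_e`
are invariant under adding constants, so the first variation of `Qobj` along constants vanishes.
For the seed `S`, compare `x` with `x - t 1_{V∖S}`: Young's inequality makes each `Q_e` subadditive
up to the factors `1 + σ`, `1 + 1/σ`, the step `t 1_{V∖S}` costs at most `t² f_e(S)`, and
`∑_e Q_e(x) ≤ Qobj(1_S / vol S) ≤ cut(S) / vol(S)²`. Taking `σ = t vol(S)` and letting `t → 0`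
gives `p(γ,S)(V∖S) ≤ φ(S)/γ`. Markov's inequality applied to `v ↦ p(γ,{v})(V∖S) = 1 − p(γ,{v})(S)`
finishes the proof.
-/

namespace Hypergraph

lemma sq_max_add_le (u w : ℝ) {σ : ℝ} (hσ : 0 < σ) :
    max (u + w) 0 ^ 2 ≤ (1 + σ) * max u 0 ^ 2 + (1 + 1 / σ) * max w 0 ^ 2 := by
  have hsum : max (u + w) 0 ≤ max u 0 + max w 0 :=
    max_le (add_le_add (le_max_left _ _) (le_max_left _ _))
      (add_nonneg (le_max_right _ _) (le_max_right _ _))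
  -- the gap is `(σ p - q)² / σ` with `p = u₊`, `q = w₊`
  have young : (max u 0 + max w 0) ^ 2 ≤ (1 + σ) * max u 0 ^ 2 + (1 + 1 / σ) * max w 0 ^ 2 := by
    have : (1 + σ) * max u 0 ^ 2 + (1 + 1 / σ) * max w 0 ^ 2 - (max u 0 + max w 0) ^ 2
        = (σ * max u 0 - max w 0) ^ 2 / σ := by
      field_simp; ring
    nlinarith [div_nonneg (sq_nonneg (σ * max u 0 - max w 0)) hσ.le]
  exact (pow_le_pow_left₀ (le_max_right _ _) hsum 2).trans young

lemma le_of_forall_pos_mul_le_add_mul_sq {a b C : ℝ} (h : ∀ t > 0, a * t ≤ b * t + C * t ^ 2) :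
    a ≤ b := by
  by_contra! hba
  have hab : 0 < a - b := sub_pos.2 hba
  set t := (a - b) / (|C| + 1) with ht
  have htpos : 0 < t := by positivity
  have hscale : (|C| + 1) * t = a - b := by rw [ht]; field_simp
  nlinarith [h t htpos, mul_le_mul_of_nonneg_right (le_abs_self C) (sq_nonneg t)]

lemma half_le_sum_filter_of_sum_mul_le {ι : Type*} {s : Finset ι} {μ g : ι → ℝ} {B : ℝ}
    (hB : 0 ≤ B) (hμ : ∀ i ∈ s, 0 ≤ μ i) (hμ1 : ∑ i ∈ s, μ i = 1) (hg : ∀ i ∈ s, 0 ≤ g i)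
    (h : ∑ i ∈ s, μ i * g i ≤ B / 2) : 1 / 2 ≤ ∑ i ∈ s with g i ≤ B, μ i := by
  by_contra! hlt
  set m := ∑ i ∈ s with ¬g i ≤ B, μ i
  have hm : 1 / 2 < m := by linarith [sum_filter_add_sum_filter_not s (fun i => g i ≤ B) μ]
  obtain ⟨j, hj, hμj⟩ : ∃ j ∈ s.filter (¬g · ≤ B), 0 < μ j :=
    exists_lt_of_sum_lt (by rw [sum_const_zero]; linarith)
  have hbig : B * m < ∑ i ∈ s with ¬g i ≤ B, μ i * g i := by
    rw [mul_sum, ← sub_pos, ← sum_sub_distrib]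
    refine sum_pos' (fun i hi => ?_) ⟨j, hj, ?_⟩
    · simp only [mem_filter, not_le] at hi
      nlinarith [hμ i hi.1]
    · simp only [mem_filter, not_le] at hj
      nlinarith
  have hsub : ∑ i ∈ s with ¬g i ≤ B, μ i * g i ≤ ∑ i ∈ s, μ i * g i :=
    sum_le_sum_of_subset_of_nonneg (filter_subset _ _) fun i hi _ => mul_nonneg (hμ i hi) (hg i hi)
  nlinarith

lemma sum_mul_sq_add_ite_sub {V : Type*} [Fintype V] [DecidableEq V] (w x : V → ℝ)
    {S : Finset V} {s : V → ℝ} (hs : ∀ u ∉ S, s u = 0) (t : ℝ) :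
    ∑ u, w u * (x u + (if u ∈ S then 0 else -t) - s u) ^ 2
      = ∑ u, w u * (x u - s u) ^ 2 + ((∑ u ∈ Sᶜ, w u) * t ^ 2 - 2 * t * ∑ u ∈ Sᶜ, w u * x u) := by
  have hu : ∀ u, w u * (x u + (if u ∈ S then 0 else -t) - s u) ^ 2
      = w u * (x u - s u) ^ 2 + if u ∈ Sᶜ then w u * (t ^ 2 - 2 * t * x u) else 0 := fun u => by
    by_cases h : u ∈ S
    · simp [h]
    · simp [h, hs u h]; ring
  rw [sum_congr rfl fun u _ => hu u, sum_add_distrib, sum_ite_mem, univ_inter, sum_mul,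
    mul_sum, ← sum_sub_distrib]
  exact congrArg _ (sum_congr rfl fun u _ => by ring)

section Edge

variable {V E : Type*} [DecidableEq V] {e : E → Finset V} {δe : E → ℝ} {ε : E}

lemma hsplit_nonneg (hδ : 0 ≤ δe ε) (S : Finset V) : 0 ≤ hsplit e δe ε S :=
  le_min (le_min (Nat.cast_nonneg _) (Nat.cast_nonneg _)) hδ

lemma hsplit_singleton (hcard : 2 ≤ (e ε).card) (hδe : 1 ≤ δe ε) {v : V} (hv : v ∈ e ε) :
    hsplit e δe ε {v} = 1 := by
  have hrest : (1 : ℝ) ≤ (e ε \ {v}).card := by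
    rw [card_sdiff_of_subset (singleton_subset_iff.2 hv), card_singleton]
    exact_mod_cast Nat.le_sub_of_add_le hcard
  rw [hsplit, inter_singleton_of_mem hv, card_singleton, Nat.cast_one, min_eq_left hrest,
    min_eq_left hδe]

lemma innerQ_nonneg (hδ : 0 ≤ δe ε) (x : V → ℝ) (a b : ℝ) : 0 ≤ innerQ e δe ε x a b :=
  add_nonneg (sum_nonneg fun _ _ => by positivity) (by positivity)

lemma Qe_le_innerQ (hδ : 0 ≤ δe ε) (x : V → ℝ) (a b : ℝ) :
    Qe e δe ε x ≤ innerQ e δe ε x a b :=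
  csInf_le ⟨0, by rintro q ⟨a, b, rfl⟩; exact innerQ_nonneg hδ x a b⟩ ⟨a, b, rfl⟩

lemma le_Qe {x : V → ℝ} {C : ℝ} (h : ∀ a b, C ≤ innerQ e δe ε x a b) : C ≤ Qe e δe ε x :=
  le_csInf ⟨_, 0, 0, rfl⟩ (by rintro q ⟨a, b, rfl⟩; exact h a b)

lemma innerQ_add_const (x : V → ℝ) (t a b : ℝ) :
    innerQ e δe ε (fun u => x u + t) (a + t) (b + t) = innerQ e δe ε x a b := by
  simp only [innerQ, add_sub_add_right_eq_sub]

lemma Qe_add_const (x : V → ℝ) (t : ℝ) : Qe e δe ε (fun u => x u + t) = Qe e δe ε x := by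
  unfold Qe
  congr 1
  ext q
  constructor
  · rintro ⟨a, b, rfl⟩
    refine ⟨a - t, b - t, ?_⟩
    rw [← innerQ_add_const x t, sub_add_cancel, sub_add_cancel]
  · rintro ⟨a, b, rfl⟩
    exact ⟨a + t, b + t, (innerQ_add_const x t a b).symm⟩

lemma innerQ_add_le (hδ : 0 ≤ δe ε) (x y : V → ℝ) (a b a' b' : ℝ) {σ : ℝ} (hσ : 0 < σ) :
    innerQ e δe ε (x + y) (a + a') (b + b')
      ≤ (1 + σ) * innerQ e δe ε x a b + (1 + 1 / σ) * innerQ e δe ε y a' b' := by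
  have hvert : ∀ v ∈ e ε,
      max ((x + y) v - (a + a')) 0 ^ 2 + max (b + b' - (x + y) v) 0 ^ 2
        ≤ (1 + σ) * (max (x v - a) 0 ^ 2 + max (b - x v) 0 ^ 2)
          + (1 + 1 / σ) * (max (y v - a') 0 ^ 2 + max (b' - y v) 0 ^ 2) := by
    intro v _
    have h₁ := sq_max_add_le (x v - a) (y v - a') hσ
    have h₂ := sq_max_add_le (b - x v) (b' - y v) hσ
    simp only [Pi.add_apply]
    rw [show x v + y v - (a + a') = x v - a + (y v - a') by ring,
      show b + b' - (x v + y v) = b - x v + (b' - y v) by ring]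
    linarith
  have hedge := mul_le_mul_of_nonneg_left (sq_max_add_le (a - b) (a' - b') hσ) hδ
  rw [← show a + a' - (b + b') = a - b + (a' - b') by ring] at hedge
  have hsum := (sum_le_sum hvert).trans_eq (by rw [sum_add_distrib, ← mul_sum, ← mul_sum])
  simp only [innerQ, mul_add] at hsum ⊢
  linarith

lemma Qe_add_le (hδ : 0 ≤ δe ε) (x y : V → ℝ) {σ : ℝ} (hσ : 0 < σ) :
    Qe e δe ε (x + y) ≤ (1 + σ) * Qe e δe ε x + (1 + 1 / σ) * Qe e δe ε y := by
  have hσ₁ : 0 < 1 + σ := by linarith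
  have hσ₂ : 0 < 1 + 1 / σ := by positivity
  have hy : ∀ a b, (Qe e δe ε (x + y) - (1 + σ) * innerQ e δe ε x a b) / (1 + 1 / σ)
      ≤ Qe e δe ε y := fun a b => le_Qe fun a' b' => by
    rw [div_le_iff₀' hσ₂]
    linarith [Qe_le_innerQ (e := e) hδ (x + y) (a + a') (b + b'),
      innerQ_add_le (e := e) hδ x y a b a' b' hσ]
  have hx : (Qe e δe ε (x + y) - (1 + 1 / σ) * Qe e δe ε y) / (1 + σ) ≤ Qe e δe ε x :=
    le_Qe fun a b => by
      have := hy a b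
      rw [div_le_iff₀' hσ₂] at this
      rw [div_le_iff₀' hσ₁]
      linarith
  rw [div_le_iff₀' hσ₁] at hx
  linarith

lemma Qe_ite_le (hδ : 0 ≤ δe ε) (S : Finset V) {c d : ℝ} (hdc : d ≤ c) :
    Qe e δe ε (fun u => if u ∈ S then c else d) ≤ (c - d) ^ 2 * hsplit e δe ε S := by
  set x : V → ℝ := fun u => if u ∈ S then c else d
  have hcd : 0 ≤ c - d := sub_nonneg.2 hdc
  have hdc' : d - c ≤ 0 := by linarith
  -- the three witnesses `(a, b) = (d, d), (c, c), (c, d)` realise the three terms of `hsplit`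
  have hin : Qe e δe ε x ≤ (c - d) ^ 2 * (e ε ∩ S).card := by
    refine (Qe_le_innerQ hδ x d d).trans_eq ?_
    have hv : ∀ v, max (x v - d) 0 ^ 2 + max (d - x v) 0 ^ 2 = if v ∈ S then (c - d) ^ 2 else 0 :=
      fun v => by by_cases h : v ∈ S <;> simp [x, h, hcd, hdc']
    simp only [innerQ, hv, sum_ite_mem, sum_const, sub_self, max_self]
    simp [mul_comm]
  have hout : Qe e δe ε x ≤ (c - d) ^ 2 * (e ε \ S).card := by
    refine (Qe_le_innerQ hδ x c c).trans_eq ?_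
    have hv : ∀ v, max (x v - c) 0 ^ 2 + max (c - x v) 0 ^ 2 = if v ∉ S then (c - d) ^ 2 else 0 :=
      fun v => by by_cases h : v ∈ S <;> simp [x, h, hcd, hdc']
    simp only [innerQ, hv, ← sum_filter, ← sdiff_eq_filter, sum_const, sub_self, max_self]
    simp [mul_comm]
  have hcap : Qe e δe ε x ≤ (c - d) ^ 2 * δe ε := by
    refine (Qe_le_innerQ hδ x c d).trans_eq ?_
    have hv : ∀ v, max (x v - c) 0 ^ 2 + max (d - x v) 0 ^ 2 = 0 :=
      fun v => by by_cases h : v ∈ S <;> simp [x, h, hdc']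
    simp [innerQ, hv, hcd, mul_comm]
  rw [hsplit, mul_min_of_nonneg _ _ (sq_nonneg _), mul_min_of_nonneg _ _ (sq_nonneg _)]
  exact le_min (le_min hin hout) hcap

lemma Qe_max_zero_le (hδ : 0 ≤ δe ε) (x : V → ℝ) :
    Qe e δe ε (fun u => max (x u) 0) ≤ Qe e δe ε x := by
  -- `t ↦ t₊` is monotone and 1-Lipschitz, so truncating `x`, `a`, `b` can only shrink each term
  have hpos : ∀ u w : ℝ, max (max u 0 - max w 0) 0 ^ 2 ≤ max (u - w) 0 ^ 2 := fun u w =>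
    pow_le_pow_left₀ (le_max_right _ _)
      (max_le ((max_sub_max_le_max u 0 w 0).trans_eq (by rw [sub_zero])) (le_max_right _ _)) 2
  refine le_Qe fun a b => (Qe_le_innerQ hδ _ (max a 0) (max b 0)).trans ?_
  exact add_le_add (sum_le_sum fun v _ => add_le_add (hpos _ _) (hpos _ _))
    (mul_le_mul_of_nonneg_left (hpos _ _) hδ)

end Edge

section Degree

variable {V E : Type*} [Fintype E] [DecidableEq V] {e : E → Finset V} {δe : E → ℝ}

lemma hcut_nonneg (hδ : ∀ ε, 0 ≤ δe ε) (S : Finset V) : 0 ≤ hcut e δe S :=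
  sum_nonneg fun ε _ => hsplit_nonneg (hδ ε) S

lemma hdeg_eq_card (hcard : ∀ ε, 2 ≤ (e ε).card) (hδe : ∀ ε, 1 ≤ δe ε) (v : V) :
    hdeg e δe v = #{ε | v ∈ e ε} := by
  rw [hdeg, sum_congr rfl fun ε hε => hsplit_singleton (hcard ε) (hδe ε) (mem_filter.1 hε).2]
  simp

lemma hdeg_pos (hcard : ∀ ε, 2 ≤ (e ε).card) (hδe : ∀ ε, 1 ≤ δe ε)
    (hcov : ∀ v : V, ∃ ε, v ∈ e ε) (v : V) : 0 < hdeg e δe v := by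
  obtain ⟨ε, hε⟩ := hcov v
  rw [hdeg_eq_card hcard hδe]
  exact_mod_cast card_pos.2 ⟨ε, mem_filter.2 ⟨mem_univ ε, hε⟩⟩

end Degree

section Diffusion

variable {V E : Type*} [Fintype V] [Fintype E] [DecidableEq V] {e : E → Finset V} {δe : E → ℝ}
  {γ : ℝ} {T : Finset V} {x : V → ℝ}

lemma sum_hdeg_mul_seed (hT : hvol e δe T ≠ 0) :
    ∑ v, hdeg e δe v * ((if v ∈ T then 1 else 0) / hvol e δe T) = 1 := by
  simp_rw [mul_div_assoc', mul_ite, mul_one, mul_zero, ← sum_div, sum_ite_mem, univ_inter]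
  exact div_self hT

lemma Qobj_add_const (hT : hvol e δe T ≠ 0) (x : V → ℝ) (t : ℝ) :
    Qobj e δe γ T (fun u => x u + t) =
      Qobj e δe γ T x + γ * (hM e δe * t ^ 2 + 2 * (∑ v, hdeg e δe v * x v - 1) * t) := by
  have hexpand : ∀ s : V → ℝ, ∑ v, hdeg e δe v * (x v + t - s v) ^ 2 =
      ∑ v, hdeg e δe v * (x v - s v) ^ 2 + ((∑ v, hdeg e δe v) * t ^ 2
        + 2 * (∑ v, hdeg e δe v * x v - ∑ v, hdeg e δe v * s v) * t) := fun s => by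
    rw [sum_mul, ← sum_sub_distrib, mul_sum, sum_mul, ← sum_add_distrib, ← sum_add_distrib]
    exact sum_congr rfl fun v _ => by ring
  have hseed := hexpand fun v => (if v ∈ T then 1 else 0) / hvol e δe T
  simp only [sum_hdeg_mul_seed hT] at hseed
  simp only [Qobj, Qe_add_const, hseed]
  rw [show hM e δe = ∑ v, hdeg e δe v from rfl]
  ring

lemma sum_hdeg_mul_eq_one_of_forall_Qobj_le (hγ : 0 < γ) (hT : hvol e δe T ≠ 0)
    (hx : ∀ y, Qobj e δe γ T x ≤ Qobj e δe γ T y) : ∑ v, hdeg e δe v * x v = 1 := by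
  have hquad : ∀ t : ℝ, 0 ≤ γ * hM e δe * (t * t) + 2 * γ * (∑ v, hdeg e δe v * x v - 1) * t + 0 :=
    fun t => by have := hx fun u => x u + t; rw [Qobj_add_const hT] at this; nlinarith
  have hdisc := discrim_le_zero hquad
  rw [discrim, mul_zero, sub_zero] at hdisc
  have := pow_eq_zero_iff two_ne_zero |>.1 (le_antisymm hdisc (sq_nonneg _))
  have := (mul_eq_zero.1 this).resolve_left (by positivity)
  linarith

lemma nonneg_of_forall_Qobj_le (hδ : ∀ ε, 0 ≤ δe ε) (hd : ∀ v, 0 < hdeg e δe v) (hγ : 0 < γ)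
    (hx : ∀ y, Qobj e δe γ T x ≤ Qobj e δe γ T y) (v : V) : 0 ≤ x v := by
  by_contra! hneg
  have hs : ∀ u, 0 ≤ (if u ∈ T then (1 : ℝ) else 0) / hvol e δe T := fun u =>
    div_nonneg (by split_ifs <;> norm_num) (sum_nonneg fun w _ => (hd w).le)
  have hle : ∀ u, (max (x u) 0 - (if u ∈ T then 1 else 0) / hvol e δe T) ^ 2
      ≤ (x u - (if u ∈ T then 1 else 0) / hvol e δe T) ^ 2 := fun u => by
    rcases le_total 0 (x u) with h | h
    · rw [max_eq_left h]
    · rw [max_eq_right h]; nlinarith [hs u]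
  have hlt : (max (x v) 0 - (if v ∈ T then 1 else 0) / hvol e δe T) ^ 2
      < (x v - (if v ∈ T then 1 else 0) / hvol e δe T) ^ 2 := by
    rw [max_eq_right hneg.le]; nlinarith [hs v]
  have hseed := sum_lt_sum (fun u _ => mul_le_mul_of_nonneg_left (hle u) (hd u).le)
    ⟨v, mem_univ v, mul_lt_mul_of_pos_left hlt (hd v)⟩
  have : Qobj e δe γ T (fun u => max (x u) 0) < Qobj e δe γ T x :=
    add_lt_add_of_lt_of_le (mul_lt_mul_of_pos_left hseed hγ)
      (sum_le_sum fun ε _ => Qe_max_zero_le (hδ ε) x)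
  exact (hx _).not_gt this

lemma sum_Qe_le_of_forall_Qobj_le (hδ : ∀ ε, 0 ≤ δe ε) (hd : ∀ v, 0 ≤ hdeg e δe v) (hγ : 0 ≤ γ)
    {S : Finset V} (hS : 0 < hvol e δe S) (hx : ∀ y, Qobj e δe γ S x ≤ Qobj e δe γ S y) :
    ∑ ε, Qe e δe ε x ≤ hcut e δe S / hvol e δe S ^ 2 := by
  set s : V → ℝ := fun u => if u ∈ S then 1 / hvol e δe S else 0
  have hseed : Qobj e δe γ S s = ∑ ε, Qe e δe ε s := by
    simp only [Qobj, add_eq_right, s]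
    exact mul_eq_zero_of_right _ (sum_eq_zero fun u _ => by split_ifs <;> simp)
  calc ∑ ε, Qe e δe ε x ≤ Qobj e δe γ S x :=
        le_add_of_nonneg_left (mul_nonneg hγ (sum_nonneg fun u _ => by have := hd u; positivity))
    _ ≤ ∑ ε, Qe e δe ε s := hseed ▸ hx s
    _ ≤ ∑ ε, (1 / hvol e δe S - 0) ^ 2 * hsplit e δe ε S :=
        sum_le_sum fun ε _ => Qe_ite_le (hδ ε) S (by positivity)
    _ = hcut e δe S / hvol e δe S ^ 2 := by
        rw [← mul_sum, sub_zero, div_pow, one_pow, one_div_mul_eq_div, hcut]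

lemma sum_compl_hdeg_mul_le_of_forall_Qobj_le (hδ : ∀ ε, 0 ≤ δe ε) (hd : ∀ v, 0 ≤ hdeg e δe v)
    (hγ : 0 < γ) {S : Finset V} (hS : 0 < hvol e δe S)
    (hx : ∀ y, Qobj e δe γ S x ≤ Qobj e δe γ S y) :
    ∑ u ∈ Sᶜ, hdeg e δe u * x u ≤ hcut e δe S / (γ * hvol e δe S) := by
  have hQx := sum_Qe_le_of_forall_Qobj_le hδ hd hγ.le hS hx
  -- compare `x` with `x - t 1_{Sᶜ}` and let `t → 0`
  suffices h : ∀ t > 0, 2 * γ * (∑ u ∈ Sᶜ, hdeg e δe u * x u) * t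
      ≤ 2 * (hcut e δe S / hvol e δe S) * t
        + (γ * ∑ u ∈ Sᶜ, hdeg e δe u + hcut e δe S) * t ^ 2 by
    rw [mul_comm, ← div_div, le_div_iff₀ hγ]
    linarith [le_of_forall_pos_mul_le_add_mul_sq h]
  intro t ht
  set σ := t * hvol e δe S
  have hσ : 0 < σ := by positivity
  have hQy : ∑ ε, Qe e δe ε (x + fun u => if u ∈ S then 0 else -t)
      ≤ (1 + σ) * ∑ ε, Qe e δe ε x + (1 + 1 / σ) * t ^ 2 * hcut e δe S := by
    rw [mul_sum, hcut, mul_sum, ← sum_add_distrib]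
    refine sum_le_sum fun ε _ => (Qe_add_le (hδ ε) _ _ hσ).trans ?_
    have := Qe_ite_le (e := e) (hδ ε) S (neg_nonpos.2 ht.le)
    rw [zero_sub, neg_neg] at this
    nlinarith [show (0 : ℝ) < 1 + 1 / σ by positivity]
  have hopt := hx (x + fun u => if u ∈ S then 0 else -t)
  simp only [Qobj, Pi.add_apply] at hopt
  have hseed := sum_mul_sq_add_ite_sub (hdeg e δe) x
    (S := S) (s := fun u => (if u ∈ S then 1 else 0) / hvol e δe S) (fun u hu => by simp [hu]) t
  beta_reduce at hseed
  rw [hseed] at hopt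
  have hσQ : σ * ∑ ε, Qe e δe ε x ≤ t * (hcut e δe S / hvol e δe S) :=
    (mul_le_mul_of_nonneg_left hQx hσ.le).trans_eq (by simp only [σ]; field_simp)
  have hyoung : (1 + 1 / σ) * t ^ 2 * hcut e δe S
      = t ^ 2 * hcut e δe S + t * (hcut e δe S / hvol e δe S) := by
    simp only [σ]; field_simp
  nlinarith

end Diffusion

end Hypergraph

open Hypergraph

open scoped Classical in
/-- Good-seed sampling lemma: if `v ∈ S` is sampled from a distribution `μ` supported
on `S` whose expected diffusion mass outside `S` is at most `c` times that of the
`S`-seeded diffusion, then with probability at least `1/2`,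
`p(γ,{v})(S) ≥ 1 − 2cφ(S)/γ`. -/
theorem good_seed_sampling {V E : Type*} [Fintype V] [Fintype E] [DecidableEq V]
    (e : E → Finset V) (δe : E → ℝ)
    (hcard : ∀ ε, 2 ≤ (e ε).card) (hδe : ∀ ε, 1 ≤ δe ε)
    (hcov : ∀ v : V, ∃ ε, v ∈ e ε)
    (γ c : ℝ) (hγ : 0 < γ) (hc : 0 < c)
    (S : Finset V) (hS0 : 0 < hvol e δe S) (hS2 : hvol e δe S ≤ hM e δe / 2)
    (μ : V → ℝ) (hμ0 : ∀ v, 0 ≤ μ v) (hμsupp : ∀ v, v ∉ S → μ v = 0)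
    (hμ1 : ∑ v : V, μ v = 1)
    (xseed : V → V → ℝ)
    (hxseed : ∀ v ∈ S, ∀ y : V → ℝ,
      Qobj e δe γ {v} (xseed v) ≤ Qobj e δe γ {v} y)
    (xS : V → ℝ) (hxS : ∀ y : V → ℝ, Qobj e δe γ S xS ≤ Qobj e δe γ S y)
    (hexp : ∑ v : V, μ v * (∑ u ∈ Sᶜ, hdeg e δe u * xseed v u) ≤
      c * ∑ u ∈ Sᶜ, hdeg e δe u * xS u) :
    (1 : ℝ) / 2 ≤ ∑ v ∈ univ.filter
      (fun v => 1 - 2 * c * hcond e δe S / γ ≤ ∑ u ∈ S, hdeg e δe u * xseed v u),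
        μ v := by
  have hd := hdeg_pos hcard hδe hcov
  have hδ : ∀ ε, 0 ≤ δe ε := fun ε => zero_le_one.trans (hδe ε)
  have hφ : hcond e δe S = hcut e δe S / hvol e δe S := by
    rw [hcond, min_eq_left (by linarith)]
  have hmass : ∀ v ∈ S, ∑ u ∈ S, hdeg e δe u * xseed v u
      = 1 - ∑ u ∈ Sᶜ, hdeg e δe u * xseed v u := fun v hv => by
    have hvol_v : hvol e δe {v} ≠ 0 := by rw [hvol, sum_singleton]; exact (hd v).ne'
    rw [← sum_hdeg_mul_eq_one_of_forall_Qobj_le hγ hvol_v (hxseed v hv), ← sum_add_sum_compl S]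
    ring
  have hμS : ∑ v ∈ S, μ v = 1 := hμ1 ▸ sum_subset (subset_univ S) fun v _ hv => hμsupp v hv
  have hexpS : ∑ v ∈ S, μ v * ∑ u ∈ Sᶜ, hdeg e δe u * xseed v u
      ≤ 2 * c * hcond e δe S / γ / 2 := by
    rw [sum_subset (subset_univ S) fun v _ hv => by rw [hμsupp v hv, zero_mul]]
    refine hexp.trans ((mul_le_mul_of_nonneg_left (sum_compl_hdeg_mul_le_of_forall_Qobj_le hδ
      (fun v => (hd v).le) hγ hS0 hxS) hc.le).trans_eq ?_)
    rw [hφ]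
    field_simp
  have hmarkov := half_le_sum_filter_of_sum_mul_le
    (by rw [hφ]; have := hcut_nonneg (e := e) hδ S; positivity) (fun v _ => hμ0 v) hμS
    (fun v hv => sum_nonneg fun u _ =>
      mul_nonneg (hd u).le (nonneg_of_forall_Qobj_le hδ hd hγ (hxseed v hv) u)) hexpS
  refine hmarkov.trans (sum_le_sum_of_subset_of_nonneg (fun v hv => ?_) fun v _ _ => hμ0 v)
  rw [mem_filter] at hv ⊢
  exact ⟨mem_univ v, by rw [hmass v hv.1]; linarith [hv.2]⟩
end
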